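/- arXiv:2512.07672 — 13 statements merged into one kernel-verified Lean document; each statement's English description precedes it below -/
import Mathlib

section
/- If G is a connected bipartite graph with partite sets A and B, and X is a distance-equalizer set of G (i.e., for any two vertices x,y ∉ X there exists w ∈ X with d(x,w) = d(y,w)), then A ⊆ X or B ⊆ X. Consequently, the equidistant dimension of G is at least min{|A|, |B|}. -/
open SimpleGraph
open scoped Classical

/-- A distance-equalizer set: any two vertices outside `D` are equidistant
from some vertex of `D`. -/
def IsDistEqSet {V : Type*} (G : SimpleGraph V) (D : Set V) : Prop :=
  ∀ x ∉ D, ∀ y ∉ D, ∃ w ∈ D, G.dist x w = G.dist y w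

/-- The equidistant dimension: minimum cardinality of a distance-equalizer set. -/
noncomputable def eqdim {V : Type*} [Fintype V] (G : SimpleGraph V) : ℕ :=
  sInf {k | ∃ D : Finset V, IsDistEqSet G (D : Set V) ∧ D.card = k}

open Classical in
lemma walk_parity {V : Type*} (G : SimpleGraph V) (A B : Finset V)
    (hpart : ∀ v, (v ∈ A ∧ v ∉ B) ∨ (v ∈ B ∧ v ∉ A))
    (hbip : ∀ u v, G.Adj u v → (u ∈ A ∧ v ∈ B) ∨ (u ∈ B ∧ v ∈ A))
    (f : V → ZMod 2) (hf : ∀ v, f v = if v ∈ A then 0 else 1) :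
    ∀ {u v : V} (p : G.Walk u v), f u + p.length = f v := by
  intro u v p
  induction p with
  | nil => simp
  | @cons a b c hadj q ih =>
    have hab : f a + 1 = f b := by
      rcases hbip a b hadj with ⟨ha, hb⟩ | ⟨ha, hb⟩
      · have hbA : b ∉ A := by rcases hpart b with ⟨_, h⟩ | ⟨_, h⟩ <;> simp_all
        rw [hf, hf, if_pos ha, if_neg hbA]; decide
      · have haA : a ∉ A := by rcases hpart a with ⟨_, h⟩ | ⟨_, h⟩ <;> simp_all
        rw [hf, hf, if_neg haA, if_pos hb]; decide
    rw [Walk.length_cons]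
    push_cast
    rw [← ih, ← hab]; ring

lemma key_subset {V : Type*} (G : SimpleGraph V) (hG : G.Connected)
    (A B : Finset V)
    (hpart : ∀ v, (v ∈ A ∧ v ∉ B) ∨ (v ∈ B ∧ v ∉ A))
    (hbip : ∀ u v, G.Adj u v → (u ∈ A ∧ v ∈ B) ∨ (u ∈ B ∧ v ∈ A))
    (X : Set V) (hX : IsDistEqSet G X) :
    ((A : Set V) ⊆ X ∨ (B : Set V) ⊆ X) := by
  classical
  set f : V → ZMod 2 := fun v => if v ∈ A then 0 else 1 with hfdef
  have hf : ∀ v, f v = if v ∈ A then 0 else 1 := fun v => rfl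
  have hpar : ∀ {u v : V} (p : G.Walk u v), f u + p.length = f v :=
    walk_parity G A B hpart hbip f hf
  have hdist : ∀ u v : V, f u + G.dist u v = f v := by
    intro u v
    obtain ⟨p, hp⟩ := (hG u v).exists_walk_length_eq_dist
    rw [← hp]
    exact hpar p
  by_contra hcon
  push_neg at hcon
  obtain ⟨hA, hB⟩ := hcon
  rw [Set.not_subset] at hA hB
  obtain ⟨a, haA, haX⟩ := hA
  obtain ⟨b, hbB, hbX⟩ := hB
  simp only [Finset.mem_coe] at haA hbB
  obtain ⟨w, hw, hdw⟩ := hX a haX b hbX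
  have h1 := hdist a w
  have h2 := hdist b w
  rw [hdw] at h1
  have hfa : f a = f b := by
    have := h1.trans h2.symm
    exact add_right_cancel this
  have hbA : b ∉ A := by rcases hpart b with ⟨_, h⟩ | ⟨_, h⟩ <;> simp_all
  rw [hf, hf, if_pos haA, if_neg hbA] at hfa
  exact absurd hfa (by decide)

theorem stmt_0 {V : Type*} [Fintype V] (G : SimpleGraph V) (hG : G.Connected)
    (A B : Finset V)
    (hpart : ∀ v, (v ∈ A ∧ v ∉ B) ∨ (v ∈ B ∧ v ∉ A))
    (hbip : ∀ u v, G.Adj u v → (u ∈ A ∧ v ∈ B) ∨ (u ∈ B ∧ v ∈ A))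
    (X : Set V) (hX : IsDistEqSet G X) :
    ((A : Set V) ⊆ X ∨ (B : Set V) ⊆ X) ∧ min A.card B.card ≤ eqdim G := by
  refine ⟨key_subset G hG A B hpart hbip X hX, ?_⟩
  have hne : ({k | ∃ D : Finset V, IsDistEqSet G (D : Set V) ∧ D.card = k}).Nonempty := by
    refine ⟨Finset.univ.card, Finset.univ, ?_, rfl⟩
    intro x hx
    exact absurd (by simp : x ∈ (Finset.univ : Finset V)) (by simpa using hx)
  obtain ⟨D, hD, hcard⟩ := Nat.sInf_mem hne
  rw [eqdim, ← hcard]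
  rcases key_subset G hG A B hpart hbip (D : Set V) hD with h | h
  · exact le_trans (min_le_left _ _) (Finset.card_le_card (Finset.coe_subset.mp h))
  · exact le_trans (min_le_right _ _) (Finset.card_le_card (Finset.coe_subset.mp h))
end

section
/- For any integer m ≥ 2, the equidistant dimension of the Cartesian product K_2 □ K_m equals m. -/
open SimpleGraph

/-!
Write the vertices of `K₂ □ K_m` as pairs (row, column); the distance between two vertices
is the number of coordinates in which they differ. A distance-equalizer set must meet every
column `c`, since otherwise no vertex of it is equidistant from `(0, c)` and `(1, c)`: it lies
in column `c'` ≠ `c` and in one of the two rows. Conversely, the set that picks row `0` in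
every column except a fixed column `l`, where it picks row `1`, is distance-equalizing.
-/

namespace SimpleGraph

variable {α β : Type*}

lemma dist_boxProd {G : SimpleGraph α} {H : SimpleGraph β} {x y : α × β}
    (h₁ : G.Reachable x.1 y.1) (h₂ : H.Reachable x.2 y.2) :
    (G □ H).dist x y = G.dist x.1 y.1 + H.dist x.2 y.2 := by
  rw [dist, edist_boxProd, ENat.toNat_add (edist_ne_top_iff_reachable.mpr h₁)
    (edist_ne_top_iff_reachable.mpr h₂), dist, dist]

lemma dist_top_boxProd_top [DecidableEq α] [DecidableEq β] (x y : α × β) :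
    ((⊤ : SimpleGraph α) □ (⊤ : SimpleGraph β)).dist x y =
      (if x.1 = y.1 then 0 else 1) + (if x.2 = y.2 then 0 else 1) := by
  rw [dist_boxProd reachable_top reachable_top, dist_top, dist_top]

end SimpleGraph

section EquidistantDimension

variable {V : Type*} [Fintype V] {G : SimpleGraph V}

lemma IsDistEqSet.eqdim_le {D : Finset V} (hD : IsDistEqSet G D) : eqdim G ≤ D.card :=
  Nat.sInf_le ⟨D, hD, rfl⟩

lemma le_eqdim_of_forall {k : ℕ} (h : ∀ D : Finset V, IsDistEqSet G D → k ≤ D.card) :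
    k ≤ eqdim G := by
  have huniv : IsDistEqSet G (Finset.univ : Finset V) := fun x hx => absurd (by simp) hx
  obtain ⟨D, hD, hcard⟩ :=
    Nat.sInf_mem (s := {k | ∃ D : Finset V, IsDistEqSet G D ∧ D.card = k})
      ⟨_, _, huniv, rfl⟩
  rw [eqdim, ← hcard]
  exact h D hD

end EquidistantDimension

section RookGraph

variable {β : Type*}

lemma IsDistEqSet.exists_mem_snd_eq {D : Set (Fin 2 × β)}
    (hD : IsDistEqSet ((⊤ : SimpleGraph (Fin 2)) □ (⊤ : SimpleGraph β)) D) (c : β) :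
    ∃ w ∈ D, w.2 = c := by
  classical
  by_contra! hc
  obtain ⟨w, hw, heq⟩ := hD (0, c) (fun h => hc _ h rfl) (1, c) (fun h => hc _ h rfl)
  have hwc : c ≠ w.2 := fun h => hc w hw h.symm
  rw [dist_top_boxProd_top, dist_top_boxProd_top] at heq
  rcases Fin.exists_fin_two.mp ⟨w.1, rfl⟩ with h | h <;> simp [h, hwc] at heq

lemma IsDistEqSet.card_le [Fintype β] {D : Finset (Fin 2 × β)}
    (hD : IsDistEqSet ((⊤ : SimpleGraph (Fin 2)) □ (⊤ : SimpleGraph β)) D) :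
    Fintype.card β ≤ D.card :=
  Finset.card_le_card_of_surjOn Prod.snd fun c _ => by
    simpa using hD.exists_mem_snd_eq c

def columnTransversal [Fintype β] [DecidableEq β] (l : β) : Finset (Fin 2 × β) :=
  Finset.univ.map ⟨fun j => (if j = l then 1 else 0, j), fun _ _ h => congrArg Prod.snd h⟩

lemma mem_columnTransversal [Fintype β] [DecidableEq β] {l : β} {p : Fin 2 × β} :
    p ∈ columnTransversal l ↔ p.1 = if p.2 = l then 1 else 0 := by
  simp [columnTransversal, Prod.ext_iff, eq_comm]

lemma card_columnTransversal [Fintype β] [DecidableEq β] (l : β) :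
    (columnTransversal l).card = Fintype.card β := by
  simp [columnTransversal]

lemma notMem_columnTransversal [Fintype β] [DecidableEq β] {l : β} {p : Fin 2 × β} :
    p ∉ columnTransversal l ↔ p.1 = if p.2 = l then 0 else 1 := by
  rw [mem_columnTransversal]
  split_ifs <;> omega

lemma isDistEqSet_columnTransversal [Fintype β] [DecidableEq β] (l : β) :
    IsDistEqSet ((⊤ : SimpleGraph (Fin 2)) □ (⊤ : SimpleGraph β)) (columnTransversal l) := by
  rintro ⟨a, i⟩ hx ⟨b, j⟩ hy
  obtain rfl : a = if i = l then 0 else 1 := notMem_columnTransversal.mp hx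
  obtain rfl : b = if j = l then 0 else 1 := notMem_columnTransversal.mp hy
  by_cases h : i = l ↔ j = l
  · refine ⟨(1, l), by simp [mem_columnTransversal], ?_⟩
    simp [dist_top_boxProd_top, h]
  · -- `w` shares its column with `y` and, as `x` and `y` lie in different rows, its row with `x`.
    have hij : i ≠ j := fun hij => h (hij ▸ Iff.rfl)
    refine ⟨(if j = l then 1 else 0, j), by simp [mem_columnTransversal], ?_⟩
    by_cases hj : j = l <;> simp_all [dist_top_boxProd_top]

lemma eqdim_top_boxProd_top [Fintype β] :
    eqdim ((⊤ : SimpleGraph (Fin 2)) □ (⊤ : SimpleGraph β)) = Fintype.card β := by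
  classical
  refine le_antisymm ?_ (le_eqdim_of_forall fun D hD => hD.card_le)
  cases isEmpty_or_nonempty β with
  | inl _ =>
    have hempty : IsDistEqSet ((⊤ : SimpleGraph (Fin 2)) □ (⊤ : SimpleGraph β))
        ((∅ : Finset (Fin 2 × β)) : Set (Fin 2 × β)) := fun x => isEmptyElim x.2
    simpa using hempty.eqdim_le
  | inr h => simpa [card_columnTransversal] using (isDistEqSet_columnTransversal h.some).eqdim_le

end RookGraph

theorem stmt_2_general (m : ℕ) :
    eqdim ((⊤ : SimpleGraph (Fin 2)) □ (⊤ : SimpleGraph (Fin m))) = m := by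
  rw [eqdim_top_boxProd_top, Fintype.card_fin]

theorem stmt_2 (m : ℕ) (hm : 2 ≤ m) :
    eqdim ((⊤ : SimpleGraph (Fin 2)) □ (⊤ : SimpleGraph (Fin m))) = m :=
  stmt_2_general m
end

section
/- For any integer m ≥ 3, the equidistant dimension of K_3 □ K_m equals 3. -/
open SimpleGraph

section Aux

variable {m : ℕ}

private lemma adj_iff (x y : Fin 3 × Fin m) :
    ((⊤ : SimpleGraph (Fin 3)) □ (⊤ : SimpleGraph (Fin m))).Adj x y ↔
      (x.1 ≠ y.1 ∧ x.2 = y.2) ∨ (x.2 ≠ y.2 ∧ x.1 = y.1) := by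
  simp [SimpleGraph.boxProd_adj]

private lemma dist_eq (x y : Fin 3 × Fin m) :
    ((⊤ : SimpleGraph (Fin 3)) □ (⊤ : SimpleGraph (Fin m))).dist x y =
      (if x.1 = y.1 then 0 else 1) + (if x.2 = y.2 then 0 else 1) := by
  by_cases h1 : x.1 = y.1 <;> by_cases h2 : x.2 = y.2
  · have : x = y := Prod.ext h1 h2
    simp [this, h1, h2]
  · rw [if_pos h1, if_neg h2]
    exact SimpleGraph.dist_eq_one_iff_adj.mpr ((adj_iff x y).mpr (Or.inr ⟨h2, h1⟩))
  · rw [if_neg h1, if_pos h2]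
    exact SimpleGraph.dist_eq_one_iff_adj.mpr ((adj_iff x y).mpr (Or.inl ⟨h1, h2⟩))
  · rw [if_neg h1, if_neg h2]
    set G := ((⊤ : SimpleGraph (Fin 3)) □ (⊤ : SimpleGraph (Fin m))) with hG
    have hxz : G.Adj x (x.1, y.2) := (adj_iff _ _).mpr (Or.inr ⟨h2, rfl⟩)
    have hzy : G.Adj (x.1, y.2) y := (adj_iff _ _).mpr (Or.inl ⟨h1, rfl⟩)
    have hle : G.dist x y ≤ 2 :=
      SimpleGraph.dist_le (Walk.cons hxz (Walk.cons hzy Walk.nil))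
    have hne0 : G.dist x y ≠ 0 := by
      simp only [ne_eq, SimpleGraph.dist_eq_zero_iff_eq_or_not_reachable]
      push_neg
      exact ⟨fun h => h1 (by rw [h]), ⟨Walk.cons hxz (Walk.cons hzy Walk.nil)⟩⟩
    have hne1 : G.dist x y ≠ 1 := by
      intro h
      rcases (adj_iff x y).mp (SimpleGraph.dist_eq_one_iff_adj.mp h) with ⟨_, h⟩ | ⟨_, h⟩
      · exact h2 h
      · exact h1 h
    omega

private lemma third_ne :
    ∀ a c : Fin 3, (-(a + c) ≠ a ∧ -(a + c) ≠ c) ∨ (a = c ∧ -(a + c) = a) := by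
  decide

private lemma exists_third3 : ∀ p1 p2 : Fin 3, ∃ a : Fin 3, a ≠ p1 ∧ a ≠ p2 := by decide

private lemma fin3_cases : ∀ a : Fin 3, a = 0 ∨ a = 1 ∨ a = 2 := by decide

private lemma exists_third (hm : 3 ≤ m) (q1 q2 : Fin m) :
    ∃ b : Fin m, b ≠ q1 ∧ b ≠ q2 := by
  by_contra h
  push_neg at h
  have hsub : (Finset.univ : Finset (Fin m)) ⊆ {q1, q2} := by
    intro b _
    rcases eq_or_ne b q1 with h1 | h1
    · simp [h1]
    · simp [h b h1]
  have := (Finset.card_le_card hsub).trans (Finset.card_insert_le _ _)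
  simp at this
  omega

end Aux

theorem stmt_3 (m : ℕ) (hm : 3 ≤ m) :
    eqdim ((⊤ : SimpleGraph (Fin 3)) □ (⊤ : SimpleGraph (Fin m))) = 3 := by
  have hm0 : 0 < m := by omega
  set G := ((⊤ : SimpleGraph (Fin 3)) □ (⊤ : SimpleGraph (Fin m))) with hG
  set z0 : Fin m := ⟨0, hm0⟩ with hz0
  -- membership witness: 3 is achieved
  have mem3 : (3 : ℕ) ∈
      {k | ∃ D : Finset (Fin 3 × Fin m), IsDistEqSet G (D : Set (Fin 3 × Fin m)) ∧ D.card = 3} := by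
    refine ⟨{(0, z0), (1, z0), (2, z0)}, ?_, ?_⟩
    · intro x hx y hy
      simp only [Finset.coe_insert, Finset.coe_singleton, Set.mem_insert_iff,
        Set.mem_singleton_iff, not_or] at hx hy
      have hx2 : x.2 ≠ z0 := by
        intro h
        rcases fin3_cases x.1 with h1 | h1 | h1 <;>
          [exact hx.1 (Prod.ext h1 h); exact hx.2.1 (Prod.ext h1 h);
           exact hx.2.2 (Prod.ext h1 h)]
      have hy2 : y.2 ≠ z0 := by
        intro h
        rcases fin3_cases y.1 with h1 | h1 | h1 <;>
          [exact hy.1 (Prod.ext h1 h); exact hy.2.1 (Prod.ext h1 h);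
           exact hy.2.2 (Prod.ext h1 h)]
      refine ⟨(-(x.1 + y.1), z0), ?_, ?_⟩
      · rcases fin3_cases (-(x.1 + y.1)) with h | h | h <;> simp [h]
      · rw [hG, dist_eq, dist_eq]
        rcases third_ne x.1 y.1 with ⟨ha, hc⟩ | ⟨hac, ha⟩
        · have h1 : ¬ (x.1 = -(x.1 + y.1)) := fun h => ha h.symm
          have h2 : ¬ (y.1 = -(x.1 + y.1)) := fun h => hc h.symm
          rw [if_neg h1, if_neg h2, if_neg hx2, if_neg hy2]
        · have h2 : y.1 = -(x.1 + y.1) := hac.symm.trans ha.symm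
          rw [if_pos ha.symm, if_pos h2, if_neg hx2, if_neg hy2]
    · rw [Finset.card_insert_of_notMem, Finset.card_insert_of_notMem,
        Finset.card_singleton] <;> simp [Prod.ext_iff]
  -- lower bound
  have lb : ∀ k ∈
      {k | ∃ D : Finset (Fin 3 × Fin m), IsDistEqSet G (D : Set (Fin 3 × Fin m)) ∧ D.card = k},
      3 ≤ k := by
    rintro k ⟨D, hD, rfl⟩
    by_contra hcard
    push_neg at hcard
    obtain ⟨T, hDT, -, hT2⟩ := Finset.exists_subsuperset_card_eq (Finset.subset_univ D)
      (show D.card ≤ 2 by omega)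
      (show 2 ≤ (Finset.univ : Finset (Fin 3 × Fin m)).card by
        simp [Finset.card_univ]; omega)
    obtain ⟨w1, w2, hw12, rfl⟩ := Finset.card_eq_two.mp hT2
    have key : ∃ x y : Fin 3 × Fin m, x ≠ w1 ∧ x ≠ w2 ∧ y ≠ w1 ∧ y ≠ w2 ∧
        G.dist x w1 ≠ G.dist y w1 ∧ G.dist x w2 ≠ G.dist y w2 := by
      by_cases hp : w1.1 = w2.1
      · have hq : w1.2 ≠ w2.2 := fun h => hw12 (Prod.ext hp h)
        obtain ⟨b, hb1, hb2⟩ := exists_third hm w1.2 w2.2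
        obtain ⟨a, ha1, ha2⟩ := exists_third3 w1.1 w2.1
        refine ⟨(w1.1, b), (a, b), ?_, ?_, ?_, ?_, ?_, ?_⟩
        · simp [Prod.ext_iff, hb1]
        · simp [Prod.ext_iff, hb2]
        · simp [Prod.ext_iff, ha1]
        · simp [Prod.ext_iff, ha2]
        · simp [hG, dist_eq, hb1, ha1]
        · simp [hG, dist_eq, hb2, ha2, hp]
      · by_cases hq : w1.2 = w2.2
        · obtain ⟨a, ha1, ha2⟩ := exists_third3 w1.1 w2.1
          obtain ⟨b, hb1, hb2⟩ := exists_third hm w1.2 w2.2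
          refine ⟨(a, w1.2), (a, b), ?_, ?_, ?_, ?_, ?_, ?_⟩
          · simp [Prod.ext_iff, ha1]
          · simp [Prod.ext_iff, ha2]
          · simp [Prod.ext_iff, ha1]
          · simp [Prod.ext_iff, ha2]
          · simp [hG, dist_eq, ha1, hb1]
          · simp [hG, dist_eq, ha2, hb2, hq]
        · obtain ⟨a, ha1, ha2⟩ := exists_third3 w1.1 w2.1
          obtain ⟨b, hb1, hb2⟩ := exists_third hm w1.2 w2.2
          refine ⟨(w1.1, w2.2), (a, b), ?_, ?_, ?_, ?_, ?_, ?_⟩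
          · simp [Prod.ext_iff]
            intro h
            exact absurd h.symm hq
          · simp [Prod.ext_iff, hp]
          · simp [Prod.ext_iff, ha1]
          · simp [Prod.ext_iff, ha2]
          · have hq' : ¬ (w2.2 = w1.2) := fun h => hq h.symm
            simp [hG, dist_eq, hq', ha1, hb1]
          · simp [hG, dist_eq, hp, ha2, hb2]
    obtain ⟨x, y, hx1, hx2, hy1, hy2, hd1, hd2⟩ := key
    have hx : x ∉ (D : Set (Fin 3 × Fin m)) := by
      intro h
      have := hDT (Finset.mem_coe.mp h)
      simp only [Finset.mem_insert, Finset.mem_singleton] at this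
      rcases this with rfl | rfl
      · exact hx1 rfl
      · exact hx2 rfl
    have hy : y ∉ (D : Set (Fin 3 × Fin m)) := by
      intro h
      have := hDT (Finset.mem_coe.mp h)
      simp only [Finset.mem_insert, Finset.mem_singleton] at this
      rcases this with rfl | rfl
      · exact hy1 rfl
      · exact hy2 rfl
    obtain ⟨w, hw, heq⟩ := hD x hx y hy
    have hw' := hDT (Finset.mem_coe.mp hw)
    simp only [Finset.mem_insert, Finset.mem_singleton] at hw'
    rcases hw' with rfl | rfl
    · exact hd1 heq
    · exact hd2 heq
  have h1 : eqdim G ≤ 3 := Nat.sInf_le mem3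
  have h2 : 3 ≤ eqdim G := le_csInf ⟨3, mem3⟩ lb
  omega
end

section
/- For any integer m ≥ 4, the equidistant dimension of K_4 □ K_m equals 4. -/
open SimpleGraph

/-- distance formula in K_4 □ K_m -/
lemma dist_formula {m : ℕ} (x y : Fin 4 × Fin m) :
    ((⊤ : SimpleGraph (Fin 4)) □ (⊤ : SimpleGraph (Fin m))).dist x y =
      (if x.1 = y.1 then 0 else 1) + (if x.2 = y.2 then 0 else 1) := by
  obtain ⟨a, b⟩ := x
  obtain ⟨c, d⟩ := y
  set G := (⊤ : SimpleGraph (Fin 4)) □ (⊤ : SimpleGraph (Fin m)) with hG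
  by_cases h1 : a = c <;> by_cases h2 : b = d
  · subst h1; subst h2; simp
  · have hadj : G.Adj (a, b) (c, d) := by
      rw [hG, SimpleGraph.boxProd_adj]
      exact Or.inr ⟨by simpa using h2, h1⟩
    rw [SimpleGraph.dist_eq_one_iff_adj.mpr hadj, if_pos h1, if_neg h2]
  · have hadj : G.Adj (a, b) (c, d) := by
      rw [hG, SimpleGraph.boxProd_adj]
      exact Or.inl ⟨by simpa using h1, h2⟩
    rw [SimpleGraph.dist_eq_one_iff_adj.mpr hadj, if_neg h1, if_pos h2]
  · -- distance 2
    have hadj1 : G.Adj (a, b) (a, d) := by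
      rw [hG, SimpleGraph.boxProd_adj]
      exact Or.inr ⟨by simpa using h2, rfl⟩
    have hadj2 : G.Adj (a, d) (c, d) := by
      rw [hG, SimpleGraph.boxProd_adj]
      exact Or.inl ⟨by simpa using h1, rfl⟩
    have hle : G.dist (a, b) (c, d) ≤ 2 := by
      have := SimpleGraph.dist_le (Walk.cons hadj1 (Walk.cons hadj2 (Walk.nil : G.Walk (c,d) (c,d))))
      simpa using this
    have hne0 : G.dist (a, b) (c, d) ≠ 0 := by
      intro h0
      rw [SimpleGraph.dist_eq_zero_iff_eq_or_not_reachable] at h0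
      rcases h0 with h0 | h0
      · exact h1 (by simpa using congrArg Prod.fst h0)
      · exact h0 ⟨Walk.cons hadj1 (Walk.cons hadj2 Walk.nil)⟩
    have hne1 : G.dist (a, b) (c, d) ≠ 1 := by
      intro hd
      have := SimpleGraph.dist_eq_one_iff_adj.mp hd
      rw [hG, SimpleGraph.boxProd_adj] at this
      rcases this with ⟨_, h⟩ | ⟨_, h⟩
      · exact h2 h
      · exact h1 h
    rw [if_neg h1, if_neg h2]
    omega

theorem stmt_4 (m : ℕ) (hm : 4 ≤ m) :
    eqdim ((⊤ : SimpleGraph (Fin 4)) □ (⊤ : SimpleGraph (Fin m))) = 4 := by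
  have hm0 : NeZero m := ⟨by omega⟩
  set G := (⊤ : SimpleGraph (Fin 4)) □ (⊤ : SimpleGraph (Fin m)) with hG
  -- Upper bound: D = { (i, 0) : i : Fin 4 }
  have hmem : (4 : ℕ) ∈ {k | ∃ D : Finset (Fin 4 × Fin m),
      IsDistEqSet G (D : Set (Fin 4 × Fin m)) ∧ D.card = k} := by
    refine ⟨Finset.univ.image (fun i : Fin 4 => (i, (0 : Fin m))), ?_, ?_⟩
    · intro x hx y hy
      obtain ⟨a, b⟩ := x
      obtain ⟨c, d⟩ := y
      have hb : b ≠ 0 := by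
        intro h; subst h
        exact hx (by simp)
      have hd : d ≠ 0 := by
        intro h; subst h
        exact hy (by simp)
      have key : ∀ a c : Fin 4, ∃ i, i ≠ a ∧ i ≠ c := by decide
      obtain ⟨i, hia, hic⟩ := key a c
      refine ⟨(i, 0), by simp, ?_⟩
      rw [dist_formula, dist_formula]
      simp [hia.symm, hic.symm, hb, hd]
    · rw [Finset.card_image_of_injective]
      · simp
      · intro i j hij; exact (Prod.mk.injEq _ _ _ _ ▸ hij).1
  refine le_antisymm (Nat.sInf_le hmem) (le_csInf ⟨4, hmem⟩ ?_)
  rintro k ⟨D, hD, rfl⟩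
  by_contra hlt
  push_neg at hlt
  have hcard : D.card ≤ 3 := by omega
  -- helper facts
  have hRcard : (D.image Prod.fst).card ≤ 3 := le_trans (Finset.card_image_le) hcard
  have hCcard : (D.image Prod.snd).card ≤ 3 := le_trans (Finset.card_image_le) hcard
  -- free column exists
  obtain ⟨p, hp⟩ : ∃ p : Fin m, p ∉ D.image Prod.snd := by
    by_contra h
    push_neg at h
    have : (Finset.univ : Finset (Fin m)) ⊆ D.image Prod.snd := fun v _ => h v
    have := Finset.card_le_card this
    simp at this
    omega
  -- free row exists
  obtain ⟨r, hr⟩ : ∃ r : Fin 4, r ∉ D.image Prod.fst := by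
    by_contra h
    push_neg at h
    have : (Finset.univ : Finset (Fin 4)) ⊆ D.image Prod.fst := fun v _ => h v
    have := Finset.card_le_card this
    simp at this
    omega
  by_cases hR : (D.image Prod.fst).card ≤ 2
  · -- all rows in a 2-set {a,c}; use x=(a,p), y=(c,p)
    obtain ⟨S, hSsub, hS2⟩ := Finset.exists_superset_card_eq hR (by simp)
    obtain ⟨a, c, hac, hSeq⟩ := Finset.card_eq_two.mp hS2
    have hx : (a, p) ∉ (D : Set (Fin 4 × Fin m)) := by
      intro h
      exact hp (Finset.mem_image_of_mem Prod.snd h)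
    have hy : (c, p) ∉ (D : Set (Fin 4 × Fin m)) := by
      intro h
      exact hp (Finset.mem_image_of_mem Prod.snd h)
    obtain ⟨w, hwD, hw⟩ := hD _ hx _ hy
    have hw1 : w.1 = a ∨ w.1 = c := by
      have : w.1 ∈ S := hSsub (Finset.mem_image_of_mem Prod.fst hwD)
      rw [hSeq] at this
      simpa using this
    have hw2 : w.2 ≠ p := by
      intro h
      exact hp (h ▸ Finset.mem_image_of_mem Prod.snd hwD)
    have hw2' : p ≠ w.2 := fun hh => hw2 hh.symm
    rw [dist_formula, dist_formula] at hw
    rcases hw1 with h | h <;>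
      simp [h, hac, hac.symm, hw2'] at hw
  by_cases hC : (D.image Prod.snd).card ≤ 2
  · obtain ⟨S, hSsub, hS2⟩ := Finset.exists_superset_card_eq hC (by
      simp; omega)
    obtain ⟨b, d, hbd, hSeq⟩ := Finset.card_eq_two.mp hS2
    have hx : (r, b) ∉ (D : Set (Fin 4 × Fin m)) := by
      intro h
      exact hr (Finset.mem_image_of_mem Prod.fst h)
    have hy : (r, d) ∉ (D : Set (Fin 4 × Fin m)) := by
      intro h
      exact hr (Finset.mem_image_of_mem Prod.fst h)
    obtain ⟨w, hwD, hw⟩ := hD _ hx _ hy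
    have hw2 : w.2 = b ∨ w.2 = d := by
      have : w.2 ∈ S := hSsub (Finset.mem_image_of_mem Prod.snd hwD)
      rw [hSeq] at this
      simpa using this
    have hw1 : w.1 ≠ r := by
      intro h
      exact hr (h ▸ Finset.mem_image_of_mem Prod.fst hwD)
    have hw1' : r ≠ w.1 := fun hh => hw1 hh.symm
    rw [dist_formula, dist_formula] at hw
    rcases hw2 with h | h <;>
      simp [h, hbd, hbd.symm, hw1'] at hw
  -- Case C: 3 distinct rows and 3 distinct columns, so D = {w1,w2,w3}
  push_neg at hR hC
  have hDcard : D.card = 3 := by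
    have h1 : (D.image Prod.fst).card ≤ D.card := Finset.card_image_le
    omega
  obtain ⟨w1, w2, w3, h12, h13, h23, hDeq⟩ := Finset.card_eq_three.mp hDcard
  have hRinj : ∀ u ∈ D, ∀ v ∈ D, u.1 = v.1 → u = v := by
    intro u hu v hv huv
    have : (D.image Prod.fst).card = 3 := by
      have := Finset.card_image_le (s := D) (f := Prod.fst)
      omega
    have hinj := Finset.injOn_of_card_image_eq (by rw [this, hDcard])
    exact hinj hu hv huv
  have hCinj : ∀ u ∈ D, ∀ v ∈ D, u.2 = v.2 → u = v := by
    intro u hu v hv huv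
    have : (D.image Prod.snd).card = 3 := by
      have := Finset.card_image_le (s := D) (f := Prod.snd)
      omega
    have hinj := Finset.injOn_of_card_image_eq (by rw [this, hDcard])
    exact hinj hu hv huv
  have hw1D : w1 ∈ D := by rw [hDeq]; simp
  have hw2D : w2 ∈ D := by rw [hDeq]; simp
  have hw3D : w3 ∈ D := by rw [hDeq]; simp
  have hr12 : w1.1 ≠ w2.1 := fun h => h12 (hRinj _ hw1D _ hw2D h)
  have hr13 : w1.1 ≠ w3.1 := fun h => h13 (hRinj _ hw1D _ hw3D h)
  have hr23 : w2.1 ≠ w3.1 := fun h => h23 (hRinj _ hw2D _ hw3D h)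
  have hc12 : w1.2 ≠ w2.2 := fun h => h12 (hCinj _ hw1D _ hw2D h)
  have hc13 : w1.2 ≠ w3.2 := fun h => h13 (hCinj _ hw1D _ hw3D h)
  have hc23 : w2.2 ≠ w3.2 := fun h => h23 (hCinj _ hw2D _ hw3D h)
  -- x = (w1.1, w2.2), y = (w3.1, p)
  have hp1 : p ≠ w1.2 := fun h => hp (h ▸ Finset.mem_image_of_mem Prod.snd hw1D)
  have hp2 : p ≠ w2.2 := fun h => hp (h ▸ Finset.mem_image_of_mem Prod.snd hw2D)
  have hp3 : p ≠ w3.2 := fun h => hp (h ▸ Finset.mem_image_of_mem Prod.snd hw3D)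
  have hx : (w1.1, w2.2) ∉ (D : Set (Fin 4 × Fin m)) := by
    intro h
    rw [Finset.mem_coe, hDeq] at h
    simp only [Finset.mem_insert, Finset.mem_singleton] at h
    rw [Prod.ext_iff, Prod.ext_iff, Prod.ext_iff] at h
    rcases h with ⟨h1, h2⟩ | ⟨h1, h2⟩ | ⟨h1, h2⟩
    · exact hc12 h2.symm
    · exact hr12 h1
    · exact hr13 h1
  have hy : (w3.1, p) ∉ (D : Set (Fin 4 × Fin m)) := by
    intro h
    exact hp (Finset.mem_image_of_mem Prod.snd h)
  obtain ⟨w, hwD, hw⟩ := hD _ hx _ hy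
  rw [Finset.mem_coe, hDeq] at hwD
  simp only [Finset.mem_insert, Finset.mem_singleton] at hwD
  rw [dist_formula, dist_formula] at hw
  rcases hwD with h | h | h <;> subst h <;>
    simp [hr12, hr13, hr23, hc12, hc13, hc23, hr12.symm, hr13.symm, hr23.symm,
      hc12.symm, hc13.symm, hc23.symm, hp1, hp2, hp3] at hw
end

section
/- For any integers m, n ≥ 5, the equidistant dimension of K_n □ K_m equals 5. -/
open SimpleGraph

namespace KKEq

/-! ### Distance in `K_n □ K_m` -/

variable {n m : ℕ}

lemma kk_adj {x y : Fin n × Fin m} :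
    ((⊤ : SimpleGraph (Fin n)) □ (⊤ : SimpleGraph (Fin m))).Adj x y ↔
      (x.1 ≠ y.1 ∧ x.2 = y.2) ∨ (x.1 = y.1 ∧ x.2 ≠ y.2) := by
  simp [SimpleGraph.boxProd_adj]; tauto

lemma kk_dist (x y : Fin n × Fin m) :
    ((⊤ : SimpleGraph (Fin n)) □ (⊤ : SimpleGraph (Fin m))).dist x y =
      (if x.1 = y.1 then 0 else 1) + (if x.2 = y.2 then 0 else 1) := by
  set G := (⊤ : SimpleGraph (Fin n)) □ (⊤ : SimpleGraph (Fin m)) with hG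
  by_cases h1 : x.1 = y.1 <;> by_cases h2 : x.2 = y.2
  · have : x = y := Prod.ext h1 h2
    simp [this, SimpleGraph.dist_self, h1, h2]
  · rw [if_pos h1, if_neg h2]
    exact SimpleGraph.dist_eq_one_iff_adj.mpr (kk_adj.mpr (Or.inr ⟨h1, h2⟩))
  · rw [if_neg h1, if_pos h2]
    exact SimpleGraph.dist_eq_one_iff_adj.mpr (kk_adj.mpr (Or.inl ⟨h1, h2⟩))
  · rw [if_neg h1, if_neg h2]
    have hadj1 : G.Adj x (y.1, x.2) := kk_adj.mpr (Or.inl ⟨h1, rfl⟩)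
    have hadj2 : G.Adj (y.1, x.2) y := kk_adj.mpr (Or.inr ⟨rfl, h2⟩)
    let w : G.Walk x y := SimpleGraph.Walk.cons hadj1 hadj2.toWalk
    have hle : G.dist x y ≤ 2 := by
      have := SimpleGraph.dist_le w
      simpa [w] using this
    have hne : x ≠ y := fun h => h1 (by rw [h])
    have hpos : 0 < G.dist x y := (w.reachable).pos_dist_of_ne hne
    have hne1 : G.dist x y ≠ 1 := by
      intro h
      have := SimpleGraph.dist_eq_one_iff_adj.mp h
      rw [kk_adj] at this
      tauto
    omega

lemma kk_dist_of_ne {x w : Fin n × Fin m} (hne : x ≠ w) :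
    ((⊤ : SimpleGraph (Fin n)) □ (⊤ : SimpleGraph (Fin m))).dist x w =
      if x.1 = w.1 ∨ x.2 = w.2 then 1 else 2 := by
  have hne' : ¬(x.1 = w.1 ∧ x.2 = w.2) := fun h => hne (Prod.ext h.1 h.2)
  rw [kk_dist]
  split_ifs <;> simp_all

/-! ### The finite certificate -/

def hitB (x w : Nat × Nat) : Bool := x.1 == w.1 || x.2 == w.2

def ded4 (a b c d : Nat) : List Nat :=
  [a] ++ (if b = a then [] else [b]) ++ (if c = a ∨ c = b then [] else [c])
    ++ (if d = a ∨ d = b ∨ d = c then [] else [d])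

def dedP (p1 p2 p3 p4 : Nat × Nat) : List (Nat × Nat) :=
  [p1] ++ (if p2 = p1 then [] else [p2]) ++ (if p3 = p1 ∨ p3 = p2 then [] else [p3])
    ++ (if p4 = p1 ∨ p4 = p2 ∨ p4 = p3 then [] else [p4])

def reorderCol (a b c d : Nat × Nat) :
    Option ((Nat×Nat)×(Nat×Nat)×(Nat×Nat)×(Nat×Nat)) :=
  if a.2 = b.2 then some (a,b,c,d)
  else if a.2 = c.2 then some (a,c,b,d)
  else if a.2 = d.2 then some (a,d,b,c)
  else if b.2 = c.2 then some (b,c,a,d)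
  else if b.2 = d.2 then some (b,d,a,c)
  else if c.2 = d.2 then some (c,d,a,b)
  else none

def reorderRow (a b c d : Nat × Nat) :
    Option ((Nat×Nat)×(Nat×Nat)×(Nat×Nat)×(Nat×Nat)) :=
  if a.1 = b.1 then some (a,b,c,d)
  else if a.1 = c.1 then some (a,c,b,d)
  else if a.1 = d.1 then some (a,d,b,c)
  else if b.1 = c.1 then some (b,c,a,d)
  else if b.1 = d.1 then some (b,d,a,c)
  else if c.1 = d.1 then some (c,d,a,b)
  else none

def solve (p1 p2 p3 p4 : Nat × Nat) : (Nat × Nat) × (Nat × Nat) :=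
  let cols := ded4 p1.2 p2.2 p3.2 p4.2
  let rows := ded4 p1.1 p2.1 p3.1 p4.1
  if cols.length ≤ 2 then ((4, cols.headD 4), (4, cols.getD 1 4))
  else if rows.length ≤ 2 then ((rows.headD 4, 4), (rows.getD 1 4, 4))
  else
    match dedP p1 p2 p3 p4 with
    | [a,b,c] => ((a.1, b.2), (4, c.2))
    | [a,b,c,d] =>
      match reorderCol a b c d with
      | some (q1,q2,q3,q4) =>
        ((4, q1.2),
          if q3.1 = q4.1 then (q3.1, 4)
          else if q3.1 ≠ q1.1 ∧ q3.1 ≠ q2.1 then (q3.1, q4.2)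
          else (q4.1, q3.2))
      | none =>
        match reorderRow a b c d with
        | some (q1,_,q3,q4) => ((q1.1, 4), (q3.1, q4.2))
        | none => ((a.1, b.2), (c.1, d.2))
    | _ => ((4,4),(4,4))

def good (x y w : Nat × Nat) : Bool :=
  x ≠ w && y ≠ w && (hitB x w != hitB y w)

def pats : List (ℕ × ℕ × ℕ × ℕ) :=
  [(0,0,0,0),(0,0,0,3),(0,0,2,0),(0,0,2,2),(0,0,2,3),(0,1,0,0),(0,1,0,1),(0,1,0,3),
   (0,1,1,0),(0,1,1,1),(0,1,1,3),(0,1,2,0),(0,1,2,1),(0,1,2,2),(0,1,2,3)]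

def checkPat (r s : ℕ × ℕ × ℕ × ℕ) : Bool :=
  let p1 := (r.1, s.1); let p2 := (r.2.1, s.2.1)
  let p3 := (r.2.2.1, s.2.2.1); let p4 := (r.2.2.2, s.2.2.2)
  let z := solve p1 p2 p3 p4
  good z.1 z.2 p1 && good z.1 z.2 p2 && good z.1 z.2 p3 && good z.1 z.2 p4

set_option maxRecDepth 10000 in
set_option maxHeartbeats 4000000 in
theorem allPats : ∀ r ∈ pats, ∀ s ∈ pats, checkPat r s = true := by decide

lemma good_spec {x y w : ℕ × ℕ} (h : good x y w = true) :
    x ≠ w ∧ y ≠ w ∧ ((x.1 = w.1 ∨ x.2 = w.2) ↔ ¬(y.1 = w.1 ∨ y.2 = w.2)) := by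
  simp only [good, Bool.and_eq_true, decide_eq_true_eq, bne_iff_ne, ne_eq] at h
  refine ⟨h.1.1, h.1.2, ?_⟩
  have hx : hitB x w = true ↔ (x.1 = w.1 ∨ x.2 = w.2) := by simp [hitB]
  have hy : hitB y w = true ↔ (y.1 = w.1 ∨ y.2 = w.2) := by simp [hitB]
  rw [← hx, ← hy]
  rcases Bool.eq_false_or_eq_true (hitB x w) with h1 | h1 <;>
    rcases Bool.eq_false_or_eq_true (hitB y w) with h2 | h2 <;> simp_all

/-! ### Transfer gadgets -/

variable {α : Type*} [DecidableEq α]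

def rho (a1 a2 a3 a4 t : α) : ℕ :=
  if t = a1 then 0 else if t = a2 then 1 else if t = a3 then 2 else if t = a4 then 3 else 4

lemma rho_eq_iff {a1 a2 a3 a4 s : α} (hs : s = a1 ∨ s = a2 ∨ s = a3 ∨ s = a4) (t : α) :
    rho a1 a2 a3 a4 t = rho a1 a2 a3 a4 s ↔ t = s := by
  rcases hs with rfl | rfl | rfl | rfl <;> unfold rho <;> split_ifs <;> simp_all <;>
    (intro h; exact absurd h.symm (by assumption))

def tau (a1 a2 a3 a4 r : α) (k : ℕ) : α :=
  if k = rho a1 a2 a3 a4 a1 then a1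
  else if k = rho a1 a2 a3 a4 a2 then a2
  else if k = rho a1 a2 a3 a4 a3 then a3
  else if k = rho a1 a2 a3 a4 a4 then a4
  else r

lemma tau_eq_iff {a1 a2 a3 a4 r : α} (hr1 : r ≠ a1) (hr2 : r ≠ a2) (hr3 : r ≠ a3)
    (hr4 : r ≠ a4) {s : α} (hs : s = a1 ∨ s = a2 ∨ s = a3 ∨ s = a4) (k : ℕ) :
    tau a1 a2 a3 a4 r k = s ↔ k = rho a1 a2 a3 a4 s := by
  unfold tau
  split_ifs with h1 h2 h3 h4
  · rw [h1]; exact (rho_eq_iff hs a1).symm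
  · rw [h2]; exact (rho_eq_iff hs a2).symm
  · rw [h3]; exact (rho_eq_iff hs a3).symm
  · rw [h4]; exact (rho_eq_iff hs a4).symm
  · constructor
    · intro h
      rcases hs with rfl | rfl | rfl | rfl
      · exact absurd h hr1
      · exact absurd h hr2
      · exact absurd h hr3
      · exact absurd h hr4
    · intro h
      rcases hs with rfl | rfl | rfl | rfl
      · exact absurd h h1
      · exact absurd h h2
      · exact absurd h h3
      · exact absurd h h4

lemma rho_pat_mem (a1 a2 a3 a4 : α) :
    (rho a1 a2 a3 a4 a1, rho a1 a2 a3 a4 a2, rho a1 a2 a3 a4 a3, rho a1 a2 a3 a4 a4)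
      ∈ pats := by
  by_cases h21 : a2 = a1 <;> by_cases h31 : a3 = a1 <;> by_cases h32 : a3 = a2 <;>
    by_cases h41 : a4 = a1 <;> by_cases h42 : a4 = a2 <;> by_cases h43 : a4 = a3 <;>
    simp_all [rho, pats]

lemma exists_fresh {N : ℕ} (h5 : 5 ≤ N) (a1 a2 a3 a4 : Fin N) :
    ∃ r, r ≠ a1 ∧ r ≠ a2 ∧ r ≠ a3 ∧ r ≠ a4 := by
  by_contra h
  push_neg at h
  have hsub : (Finset.univ : Finset (Fin N)) ⊆ {a1, a2, a3, a4} := by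
    intro r _
    have := h r
    simp only [Finset.mem_insert, Finset.mem_singleton]
    tauto
  have hc := Finset.card_le_card hsub
  have e1 := Finset.card_insert_le a1 ({a2, a3, a4} : Finset (Fin N))
  have e2 := Finset.card_insert_le a2 ({a3, a4} : Finset (Fin N))
  have e3 := Finset.card_insert_le a3 ({a4} : Finset (Fin N))
  have e4 : ({a4} : Finset (Fin N)).card = 1 := Finset.card_singleton a4
  rw [Finset.card_univ, Fintype.card_fin] at hc
  simp only [Finset.insert_eq] at *
  omega

/-! ### The main breaking-pair lemma -/

set_option maxHeartbeats 4000000 in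
lemma breaking_pair (hn : 5 ≤ n) (hm : 5 ≤ m) (w1 w2 w3 w4 : Fin n × Fin m) :
    ∃ x y : Fin n × Fin m,
      (x ≠ w1 ∧ x ≠ w2 ∧ x ≠ w3 ∧ x ≠ w4) ∧ (y ≠ w1 ∧ y ≠ w2 ∧ y ≠ w3 ∧ y ≠ w4) ∧
      ∀ w, (w = w1 ∨ w = w2 ∨ w = w3 ∨ w = w4) →
        ((x.1 = w.1 ∨ x.2 = w.2) ↔ ¬(y.1 = w.1 ∨ y.2 = w.2)) := by
  obtain ⟨r, hr1, hr2, hr3, hr4⟩ := exists_fresh hn w1.1 w2.1 w3.1 w4.1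
  obtain ⟨c, hc1, hc2, hc3, hc4⟩ := exists_fresh hm w1.2 w2.2 w3.2 w4.2
  set ρ : Fin n → ℕ := rho w1.1 w2.1 w3.1 w4.1 with hρ
  set σ : Fin m → ℕ := rho w1.2 w2.2 w3.2 w4.2 with hσ
  have hrmem := rho_pat_mem w1.1 w2.1 w3.1 w4.1
  have hcmem := rho_pat_mem w1.2 w2.2 w3.2 w4.2
  have hchk := allPats _ hrmem _ hcmem
  simp only [checkPat, Bool.and_eq_true] at hchk
  obtain ⟨⟨⟨hg1, hg2⟩, hg3⟩, hg4⟩ := hchk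
  set Z := solve (ρ w1.1, σ w1.2) (ρ w2.1, σ w2.2) (ρ w3.1, σ w3.2) (ρ w4.1, σ w4.2) with hZ
  have s1 := good_spec hg1
  have s2 := good_spec hg2
  have s3 := good_spec hg3
  have s4 := good_spec hg4
  -- pull back
  set TR := tau w1.1 w2.1 w3.1 w4.1 r with hTR
  set TC := tau w1.2 w2.2 w3.2 w4.2 c with hTC
  have tR : ∀ (s : Fin n), (s = w1.1 ∨ s = w2.1 ∨ s = w3.1 ∨ s = w4.1) → ∀ k : ℕ,
      (TR k = s ↔ k = ρ s) := fun s hs k => tau_eq_iff hr1 hr2 hr3 hr4 hs k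
  have tC : ∀ (s : Fin m), (s = w1.2 ∨ s = w2.2 ∨ s = w3.2 ∨ s = w4.2) → ∀ k : ℕ,
      (TC k = s ↔ k = σ s) := fun s hs k => tau_eq_iff hc1 hc2 hc3 hc4 hs k
  have hx1 : (TR Z.1.1, TC Z.1.2) ≠ w1 := by
    intro heq
    have h1 : TR Z.1.1 = w1.1 := congrArg Prod.fst heq
    have h2 : TC Z.1.2 = w1.2 := congrArg Prod.snd heq
    exact s1.1 (Prod.ext ((tR w1.1 (Or.inl rfl) Z.1.1).mp h1) ((tC w1.2 (Or.inl rfl) Z.1.2).mp h2))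
  have hy1 : (TR Z.2.1, TC Z.2.2) ≠ w1 := by
    intro heq
    have h1 : TR Z.2.1 = w1.1 := congrArg Prod.fst heq
    have h2 : TC Z.2.2 = w1.2 := congrArg Prod.snd heq
    exact s1.2.1 (Prod.ext ((tR w1.1 (Or.inl rfl) Z.2.1).mp h1) ((tC w1.2 (Or.inl rfl) Z.2.2).mp h2))
  have hiff1 : ((TR Z.1.1, TC Z.1.2).1 = w1.1 ∨ (TR Z.1.1, TC Z.1.2).2 = w1.2) ↔
      ¬((TR Z.2.1, TC Z.2.2).1 = w1.1 ∨ (TR Z.2.1, TC Z.2.2).2 = w1.2) := by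
    have e1 : TR Z.1.1 = w1.1 ↔ Z.1.1 = ρ w1.1 := tR w1.1 (Or.inl rfl) Z.1.1
    have e2 : TC Z.1.2 = w1.2 ↔ Z.1.2 = σ w1.2 := tC w1.2 (Or.inl rfl) Z.1.2
    have f1 : TR Z.2.1 = w1.1 ↔ Z.2.1 = ρ w1.1 := tR w1.1 (Or.inl rfl) Z.2.1
    have f2 : TC Z.2.2 = w1.2 ↔ Z.2.2 = σ w1.2 := tC w1.2 (Or.inl rfl) Z.2.2
    dsimp only
    rw [e1, e2, f1, f2]
    exact s1.2.2
  have hx2 : (TR Z.1.1, TC Z.1.2) ≠ w2 := by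
    intro heq
    have h1 : TR Z.1.1 = w2.1 := congrArg Prod.fst heq
    have h2 : TC Z.1.2 = w2.2 := congrArg Prod.snd heq
    exact s2.1 (Prod.ext ((tR w2.1 (Or.inr (Or.inl rfl)) Z.1.1).mp h1) ((tC w2.2 (Or.inr (Or.inl rfl)) Z.1.2).mp h2))
  have hy2 : (TR Z.2.1, TC Z.2.2) ≠ w2 := by
    intro heq
    have h1 : TR Z.2.1 = w2.1 := congrArg Prod.fst heq
    have h2 : TC Z.2.2 = w2.2 := congrArg Prod.snd heq
    exact s2.2.1 (Prod.ext ((tR w2.1 (Or.inr (Or.inl rfl)) Z.2.1).mp h1) ((tC w2.2 (Or.inr (Or.inl rfl)) Z.2.2).mp h2))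
  have hiff2 : ((TR Z.1.1, TC Z.1.2).1 = w2.1 ∨ (TR Z.1.1, TC Z.1.2).2 = w2.2) ↔
      ¬((TR Z.2.1, TC Z.2.2).1 = w2.1 ∨ (TR Z.2.1, TC Z.2.2).2 = w2.2) := by
    have e1 : TR Z.1.1 = w2.1 ↔ Z.1.1 = ρ w2.1 := tR w2.1 (Or.inr (Or.inl rfl)) Z.1.1
    have e2 : TC Z.1.2 = w2.2 ↔ Z.1.2 = σ w2.2 := tC w2.2 (Or.inr (Or.inl rfl)) Z.1.2
    have f1 : TR Z.2.1 = w2.1 ↔ Z.2.1 = ρ w2.1 := tR w2.1 (Or.inr (Or.inl rfl)) Z.2.1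
    have f2 : TC Z.2.2 = w2.2 ↔ Z.2.2 = σ w2.2 := tC w2.2 (Or.inr (Or.inl rfl)) Z.2.2
    dsimp only
    rw [e1, e2, f1, f2]
    exact s2.2.2
  have hx3 : (TR Z.1.1, TC Z.1.2) ≠ w3 := by
    intro heq
    have h1 : TR Z.1.1 = w3.1 := congrArg Prod.fst heq
    have h2 : TC Z.1.2 = w3.2 := congrArg Prod.snd heq
    exact s3.1 (Prod.ext ((tR w3.1 (Or.inr (Or.inr (Or.inl rfl))) Z.1.1).mp h1) ((tC w3.2 (Or.inr (Or.inr (Or.inl rfl))) Z.1.2).mp h2))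
  have hy3 : (TR Z.2.1, TC Z.2.2) ≠ w3 := by
    intro heq
    have h1 : TR Z.2.1 = w3.1 := congrArg Prod.fst heq
    have h2 : TC Z.2.2 = w3.2 := congrArg Prod.snd heq
    exact s3.2.1 (Prod.ext ((tR w3.1 (Or.inr (Or.inr (Or.inl rfl))) Z.2.1).mp h1) ((tC w3.2 (Or.inr (Or.inr (Or.inl rfl))) Z.2.2).mp h2))
  have hiff3 : ((TR Z.1.1, TC Z.1.2).1 = w3.1 ∨ (TR Z.1.1, TC Z.1.2).2 = w3.2) ↔
      ¬((TR Z.2.1, TC Z.2.2).1 = w3.1 ∨ (TR Z.2.1, TC Z.2.2).2 = w3.2) := by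
    have e1 : TR Z.1.1 = w3.1 ↔ Z.1.1 = ρ w3.1 := tR w3.1 (Or.inr (Or.inr (Or.inl rfl))) Z.1.1
    have e2 : TC Z.1.2 = w3.2 ↔ Z.1.2 = σ w3.2 := tC w3.2 (Or.inr (Or.inr (Or.inl rfl))) Z.1.2
    have f1 : TR Z.2.1 = w3.1 ↔ Z.2.1 = ρ w3.1 := tR w3.1 (Or.inr (Or.inr (Or.inl rfl))) Z.2.1
    have f2 : TC Z.2.2 = w3.2 ↔ Z.2.2 = σ w3.2 := tC w3.2 (Or.inr (Or.inr (Or.inl rfl))) Z.2.2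
    dsimp only
    rw [e1, e2, f1, f2]
    exact s3.2.2
  have hx4 : (TR Z.1.1, TC Z.1.2) ≠ w4 := by
    intro heq
    have h1 : TR Z.1.1 = w4.1 := congrArg Prod.fst heq
    have h2 : TC Z.1.2 = w4.2 := congrArg Prod.snd heq
    exact s4.1 (Prod.ext ((tR w4.1 (Or.inr (Or.inr (Or.inr rfl))) Z.1.1).mp h1) ((tC w4.2 (Or.inr (Or.inr (Or.inr rfl))) Z.1.2).mp h2))
  have hy4 : (TR Z.2.1, TC Z.2.2) ≠ w4 := by
    intro heq
    have h1 : TR Z.2.1 = w4.1 := congrArg Prod.fst heq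
    have h2 : TC Z.2.2 = w4.2 := congrArg Prod.snd heq
    exact s4.2.1 (Prod.ext ((tR w4.1 (Or.inr (Or.inr (Or.inr rfl))) Z.2.1).mp h1) ((tC w4.2 (Or.inr (Or.inr (Or.inr rfl))) Z.2.2).mp h2))
  have hiff4 : ((TR Z.1.1, TC Z.1.2).1 = w4.1 ∨ (TR Z.1.1, TC Z.1.2).2 = w4.2) ↔
      ¬((TR Z.2.1, TC Z.2.2).1 = w4.1 ∨ (TR Z.2.1, TC Z.2.2).2 = w4.2) := by
    have e1 : TR Z.1.1 = w4.1 ↔ Z.1.1 = ρ w4.1 := tR w4.1 (Or.inr (Or.inr (Or.inr rfl))) Z.1.1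
    have e2 : TC Z.1.2 = w4.2 ↔ Z.1.2 = σ w4.2 := tC w4.2 (Or.inr (Or.inr (Or.inr rfl))) Z.1.2
    have f1 : TR Z.2.1 = w4.1 ↔ Z.2.1 = ρ w4.1 := tR w4.1 (Or.inr (Or.inr (Or.inr rfl))) Z.2.1
    have f2 : TC Z.2.2 = w4.2 ↔ Z.2.2 = σ w4.2 := tC w4.2 (Or.inr (Or.inr (Or.inr rfl))) Z.2.2
    dsimp only
    rw [e1, e2, f1, f2]
    exact s4.2.2
  refine ⟨(TR Z.1.1, TC Z.1.2), (TR Z.2.1, TC Z.2.2), ⟨hx1, hx2, hx3, hx4⟩,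
    ⟨hy1, hy2, hy3, hy4⟩, ?_⟩
  intro w hw
  rcases hw with rfl | rfl | rfl | rfl
  · exact hiff1
  · exact hiff2
  · exact hiff3
  · exact hiff4

end KKEq

namespace KKEq

/-! ### Covering a small finset by four elements -/

lemma four_cover {β : Type*} (D : Finset β) (hcard : D.card ≤ 4) (z : β) :
    ∃ w1 w2 w3 w4 : β, ∀ w ∈ D, w = w1 ∨ w = w2 ∨ w = w3 ∨ w = w4 := by
  refine ⟨D.toList.getD 0 z, D.toList.getD 1 z, D.toList.getD 2 z, D.toList.getD 3 z, ?_⟩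
  intro w hw
  have hw' : w ∈ D.toList := Finset.mem_toList.mpr hw
  obtain ⟨k, hk, hget⟩ := List.mem_iff_getElem.mp hw'
  have hlen : D.toList.length ≤ 4 := by rw [Finset.length_toList]; exact hcard
  have hk4 : k < 4 := lt_of_lt_of_le hk hlen
  interval_cases k <;> rw [← hget, List.getD_eq_getElem _ _ hk] <;> tauto

/-! ### Lower bound -/

lemma lower_bound (hn : 5 ≤ n) (hm : 5 ≤ m) (D : Finset (Fin n × Fin m))
    (hD : IsDistEqSet ((⊤ : SimpleGraph (Fin n)) □ (⊤ : SimpleGraph (Fin m))) (D : Set _)) :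
    5 ≤ D.card := by
  by_contra hlt
  push_neg at hlt
  have hz : (0 : ℕ) < n := by omega
  have hz' : (0 : ℕ) < m := by omega
  obtain ⟨w1, w2, w3, w4, hcov⟩ := four_cover D (by omega) (⟨0, hz⟩, ⟨0, hz'⟩)
  obtain ⟨x, y, hx, hy, hiff⟩ := breaking_pair hn hm w1 w2 w3 w4
  have hxD : x ∉ (D : Set (Fin n × Fin m)) := by
    intro hmem
    rcases hcov x hmem with rfl | rfl | rfl | rfl
    · exact hx.1 rfl
    · exact hx.2.1 rfl
    · exact hx.2.2.1 rfl
    · exact hx.2.2.2 rfl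
  have hyD : y ∉ (D : Set (Fin n × Fin m)) := by
    intro hmem
    rcases hcov y hmem with rfl | rfl | rfl | rfl
    · exact hy.1 rfl
    · exact hy.2.1 rfl
    · exact hy.2.2.1 rfl
    · exact hy.2.2.2 rfl
  obtain ⟨w, hwD, hdist⟩ := hD x hxD y hyD
  have hwcov := hcov w hwD
  have hxw : x ≠ w := by
    rcases hwcov with rfl | rfl | rfl | rfl
    exacts [hx.1, hx.2.1, hx.2.2.1, hx.2.2.2]
  have hyw : y ≠ w := by
    rcases hwcov with rfl | rfl | rfl | rfl
    exacts [hy.1, hy.2.1, hy.2.2.1, hy.2.2.2]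
  have hi := hiff w hwcov
  rw [kk_dist_of_ne hxw, kk_dist_of_ne hyw] at hdist
  by_cases hc : x.1 = w.1 ∨ x.2 = w.2
  · rw [if_pos hc, if_neg (hi.mp hc)] at hdist
    omega
  · have hyc : y.1 = w.1 ∨ y.2 = w.2 := by
      by_contra h'
      exact hc (hi.mpr h')
    rw [if_neg hc, if_pos hyc] at hdist
    omega

/-! ### Upper bound -/

lemma upper_bound (hn : 5 ≤ n) (hm : 5 ≤ m) :
    ∃ D : Finset (Fin n × Fin m),
      IsDistEqSet ((⊤ : SimpleGraph (Fin n)) □ (⊤ : SimpleGraph (Fin m))) (D : Set _) ∧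
      D.card = 5 := by
  refine ⟨Finset.univ.image (fun i : Fin 5 => (Fin.castLE hn i, Fin.castLE hm i)), ?_, ?_⟩
  · intro x _ y _
    have hex : ∃ i : Fin 5, (i : ℕ) ≠ (x.1 : ℕ) ∧ (i : ℕ) ≠ (x.2 : ℕ) ∧
        (i : ℕ) ≠ (y.1 : ℕ) ∧ (i : ℕ) ≠ (y.2 : ℕ) := by
      by_contra h
      push_neg at h
      have hsub : (Finset.univ.image (fun i : Fin 5 => (i : ℕ))) ⊆
          {(x.1 : ℕ), (x.2 : ℕ), (y.1 : ℕ), (y.2 : ℕ)} := by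
        intro t ht
        simp only [Finset.mem_image, Finset.mem_univ, true_and] at ht
        obtain ⟨i, rfl⟩ := ht
        have := h i
        simp only [Finset.mem_insert, Finset.mem_singleton]
        tauto
      have hc := Finset.card_le_card hsub
      rw [Finset.card_image_of_injective _ Fin.val_injective, Finset.card_univ,
        Fintype.card_fin] at hc
      have e1 := Finset.card_insert_le (x.1 : ℕ) ({(x.2 : ℕ), (y.1 : ℕ), (y.2 : ℕ)} : Finset ℕ)
      have e2 := Finset.card_insert_le (x.2 : ℕ) ({(y.1 : ℕ), (y.2 : ℕ)} : Finset ℕ)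
      have e3 := Finset.card_insert_le (y.1 : ℕ) ({(y.2 : ℕ)} : Finset ℕ)
      have e4 : ({(y.2 : ℕ)} : Finset ℕ).card = 1 := Finset.card_singleton _
      simp only [Finset.insert_eq] at *
      omega
    obtain ⟨i, hi1, hi2, hi3, hi4⟩ := hex
    refine ⟨(Fin.castLE hn i, Fin.castLE hm i), ?_, ?_⟩
    · simp only [Finset.coe_image, Set.mem_image, Finset.mem_coe, Finset.coe_univ,
        Set.image_univ, Set.mem_range]
      exact ⟨i, rfl⟩
    · have hx1 : x.1 ≠ Fin.castLE hn i := fun h => hi1 (by rw [h, Fin.coe_castLE])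
      have hx2 : x.2 ≠ Fin.castLE hm i := fun h => hi2 (by rw [h, Fin.coe_castLE])
      have hy1 : y.1 ≠ Fin.castLE hn i := fun h => hi3 (by rw [h, Fin.coe_castLE])
      have hy2 : y.2 ≠ Fin.castLE hm i := fun h => hi4 (by rw [h, Fin.coe_castLE])
      have hnex : x ≠ (Fin.castLE hn i, Fin.castLE hm i) :=
        fun h => hx1 (congrArg Prod.fst h)
      have hney : y ≠ (Fin.castLE hn i, Fin.castLE hm i) :=
        fun h => hy1 (congrArg Prod.fst h)
      rw [kk_dist_of_ne hnex, kk_dist_of_ne hney, if_neg (by tauto), if_neg (by tauto)]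
  · rw [Finset.card_image_of_injective _ ?_, Finset.card_univ, Fintype.card_fin]
    intro i j h
    exact Fin.castLE_injective hn (congrArg Prod.fst h)

end KKEq

open KKEq in
theorem stmt_5 (m n : ℕ) (hm : 5 ≤ m) (hn : 5 ≤ n) :
    eqdim ((⊤ : SimpleGraph (Fin n)) □ (⊤ : SimpleGraph (Fin m))) = 5 := by
  obtain ⟨D5, hD5, hcard5⟩ := upper_bound hn hm
  have hmem : 5 ∈ {k | ∃ D : Finset (Fin n × Fin m),
      IsDistEqSet ((⊤ : SimpleGraph (Fin n)) □ (⊤ : SimpleGraph (Fin m))) (D : Set _) ∧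
      D.card = k} := ⟨D5, hD5, hcard5⟩
  unfold eqdim
  apply le_antisymm
  · exact Nat.sInf_le hmem
  · apply le_csInf ⟨5, hmem⟩
    rintro k ⟨D, hD, rfl⟩
    exact lower_bound hn hm D hD
end

section
/- In K_n □ K_m with m, n ≥ 5 (with V(K_n) = {1,...,n}, V(K_m) = {1,...,m}), the set S = {(1,1), (2,1), (3,1), (2,2), (3,3)} is a distance-equalizer set. -/
/-- Distance in the two-dimensional Hamming graph `K_n □ K_m`. -/
def hamDist2 {n m : ℕ} (v w : Fin n × Fin m) : ℕ :=
  (if v.1 = w.1 then 0 else 1) + (if v.2 = w.2 then 0 else 1)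

def clsF {n : ℕ} (a : Fin n) : Fin 4 :=
  if (a : ℕ) = 0 then 0 else if (a : ℕ) = 1 then 1 else if (a : ℕ) = 2 then 2 else 3

def LF : List (Fin 4 × Fin 4) := [(0,0),(1,0),(2,0),(1,1),(2,2)]

lemma clsF_eq {n : ℕ} (a : Fin n) (k : Fin 4) (hk : (k : ℕ) < 3) :
    clsF a = k ↔ (a : ℕ) = (k : ℕ) := by
  unfold clsF
  split_ifs with h0 h1 h2 <;> simp_all [Fin.ext_iff] <;> omega

lemma keyF : ∀ x : Fin 4 × Fin 4, ∀ y : Fin 4 × Fin 4, x ∉ LF → y ∉ LF →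
    ∃ p ∈ LF, ((if x.1 = p.1 then 0 else 1) + (if x.2 = p.2 then 0 else 1) : ℕ) =
      (if y.1 = p.1 then 0 else 1) + (if y.2 = p.2 then 0 else 1) := by decide

lemma LF_lt : ∀ p ∈ LF, (p.1 : ℕ) < 3 ∧ (p.2 : ℕ) < 3 := by decide

theorem stmt_6 (n m : ℕ) (hn : 5 ≤ n) (hm : 5 ≤ m)
    (S : Set (Fin n × Fin m))
    (hS : S = {p | ((p.1 : ℕ) + 1, (p.2 : ℕ) + 1) ∈
      ({(1, 1), (2, 1), (3, 1), (2, 2), (3, 3)} : Set (ℕ × ℕ))}) :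
    ∀ v ∉ S, ∀ w ∉ S, ∃ s ∈ S, hamDist2 v s = hamDist2 w s := by
  subst hS
  have memS : ∀ v : Fin n × Fin m,
      v ∈ {p : Fin n × Fin m | ((p.1 : ℕ) + 1, (p.2 : ℕ) + 1) ∈
        ({(1, 1), (2, 1), (3, 1), (2, 2), (3, 3)} : Set (ℕ × ℕ))} ↔
      (clsF v.1, clsF v.2) ∈ LF := by
    intro v
    simp only [Set.mem_setOf_eq, Set.mem_insert_iff, Set.mem_singleton_iff, Prod.mk.injEq, LF,
      List.mem_cons, List.not_mem_nil, or_false]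
    rw [clsF_eq v.1 0 (by norm_num), clsF_eq v.2 0 (by norm_num),
      clsF_eq v.1 1 (by norm_num), clsF_eq v.2 1 (by norm_num),
      clsF_eq v.1 2 (by norm_num), clsF_eq v.2 2 (by norm_num)]
    simp only [Fin.val_zero, Fin.val_one, Fin.val_two]
    omega
  intro v hv w hw
  obtain ⟨p, hp, hd⟩ := keyF (clsF v.1, clsF v.2) (clsF w.1, clsF w.2)
    (fun h => hv ((memS v).mpr h)) (fun h => hw ((memS w).mpr h))
  obtain ⟨h1, h2⟩ := LF_lt p hp
  refine ⟨(⟨(p.1 : ℕ), by omega⟩, ⟨(p.2 : ℕ), by omega⟩), ?_, ?_⟩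
  · apply (memS _).mpr
    have c1 : clsF (⟨(p.1 : ℕ), by omega⟩ : Fin n) = p.1 := (clsF_eq _ p.1 h1).mpr rfl
    have c2 : clsF (⟨(p.2 : ℕ), by omega⟩ : Fin m) = p.2 := (clsF_eq _ p.2 h2).mpr rfl
    simp only [c1, c2]
    exact hp
  · have e1 : ∀ a : Fin n, (a = ⟨(p.1 : ℕ), by omega⟩) ↔ clsF a = p.1 := by
      intro a; rw [clsF_eq a p.1 h1, Fin.ext_iff]
    have e2 : ∀ b : Fin m, (b = ⟨(p.2 : ℕ), by omega⟩) ↔ clsF b = p.2 := by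
      intro b; rw [clsF_eq b p.2 h2, Fin.ext_iff]
    simp only [hamDist2, e1, e2]
    simpa using hd
end

section
/- For any integer n ≥ 2 with n ≢ 0 (mod 4), the equidistant dimension of the hypercube Q_n equals 2^{n-1}. -/
open SimpleGraph

/-- The hypercube graph on binary strings of length `n`: two strings are
adjacent iff they differ in exactly one coordinate. -/
def hypercube (n : ℕ) : SimpleGraph (Fin n → Bool) :=
  SimpleGraph.fromRel (fun v w => hammingDist v w = 1)


section Aux
open Finset

variable {n : ℕ}

lemma hc_adj {x y : Fin n → Bool} : (hypercube n).Adj x y ↔ hammingDist x y = 1 := by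
  rw [hypercube, SimpleGraph.fromRel_adj, hammingDist_comm y x]
  constructor
  · rintro ⟨-, h | h⟩ <;> exact h
  · intro h
    refine ⟨fun e => by simp [e, hammingDist_self] at h, Or.inl h⟩

lemma hd_update {x y : Fin n → Bool} {i : Fin n} (h : x i ≠ y i) :
    hammingDist x (Function.update x i (y i)) = 1 := by
  rw [hammingDist]
  convert Finset.card_singleton i using 2
  ext j
  by_cases hj : j = i <;> simp [Function.update, hj, h]

lemma hd_update' {x y : Fin n → Bool} {i : Fin n} (h : x i ≠ y i) :
    hammingDist (Function.update x i (y i)) y = hammingDist x y - 1 := by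
  rw [hammingDist, hammingDist]
  have : ({j | Function.update x i (y i) j ≠ y j} : Finset (Fin n)) =
      ({j | x j ≠ y j} : Finset (Fin n)).erase i := by
    ext j
    by_cases hj : j = i <;> simp [Function.update, hj]
  rw [this, Finset.card_erase_of_mem]
  simpa using h

lemma exists_walk (y : Fin n → Bool) : ∀ d (x : Fin n → Bool), hammingDist x y = d →
    ∃ p : (hypercube n).Walk x y, p.length = d := by
  intro d
  induction d with
  | zero =>
    intro x hx
    rw [hammingDist_eq_zero] at hx
    subst hx; exact ⟨Walk.nil, rfl⟩
  | succ d ih =>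
    intro x hx
    have hne : x ≠ y := by
      intro e; rw [e, hammingDist_self] at hx; omega
    obtain ⟨i, hi⟩ : ∃ i, x i ≠ y i := by
      by_contra h
      push_neg at h
      exact hne (funext h)
    obtain ⟨p, hp⟩ := ih (Function.update x i (y i)) (by rw [hd_update' hi, hx]; omega)
    exact ⟨Walk.cons (hc_adj.2 (hd_update hi)) p, by simp [hp]⟩

lemma hc_reachable (x y : Fin n → Bool) : (hypercube n).Reachable x y :=
  ⟨(exists_walk y _ x rfl).choose⟩

lemma hd_le_length {x y : Fin n → Bool} (p : (hypercube n).Walk x y) :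
    hammingDist x y ≤ p.length := by
  induction p with
  | nil => simp
  | @cons u v w h p ih =>
    have h1 := hammingDist_triangle u v w
    have h2 := hc_adj.1 h
    simp only [Walk.length_cons]
    omega

lemma hc_dist (x y : Fin n → Bool) : (hypercube n).dist x y = hammingDist x y := by
  obtain ⟨p, hp⟩ := exists_walk y (hammingDist x y) x rfl
  refine le_antisymm (hp ▸ SimpleGraph.dist_le p) ?_
  obtain ⟨q, hq⟩ := (hc_reachable x y).exists_walk_length_eq_dist
  exact hq ▸ hd_le_length q

lemma hd_cast (x y : Fin n → Bool) :
    ((hammingDist x y : ZMod 2)) = ∑ i, if x i = y i then 0 else 1 := by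
  rw [hammingDist, Finset.natCast_card_filter]
  apply Finset.sum_congr rfl
  intro i _
  by_cases h : x i = y i <;> simp [h]

lemma parity_add (x y w : Fin n → Bool) :
    (hammingDist x w : ZMod 2) + hammingDist y w = hammingDist x y := by
  rw [hd_cast, hd_cast, hd_cast, ← Finset.sum_add_distrib]
  apply Finset.sum_congr rfl
  intro i _
  have : ∀ a b c : Bool, ((if a = c then (0:ZMod 2) else 1) + (if b = c then 0 else 1))
      = (if a = b then 0 else 1) := by decide
  exact this _ _ _

lemma half_card (hn : 0 < n) (P : (Fin n → Bool) → Prop) [DecidablePred P]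
    (h : ∀ v, P (Function.update v ⟨0, hn⟩ (!(v ⟨0, hn⟩))) ↔ ¬ P v) :
    (Finset.univ.filter P).card = 2 ^ (n - 1) := by
  set i0 : Fin n := ⟨0, hn⟩
  set f : (Fin n → Bool) → (Fin n → Bool) := fun v => Function.update v i0 (!(v i0)) with hf
  have hff : ∀ v, f (f v) = v := by
    intro v; funext j
    by_cases hj : j = i0 <;> simp [hf, Function.update, hj]
  have hcard : (Finset.univ.filter P).card
      = (Finset.univ.filter (fun v => ¬ P v)).card := by
    apply Finset.card_bij (fun v _ => f v)
    · intro a ha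
      simp only [Finset.mem_filter, Finset.mem_univ, true_and] at *
      exact fun hPfa => (h a).1 hPfa ha
    · intro a _ b _ hab
      have := congrArg f hab
      rwa [hff, hff] at this
    · intro b hb
      refine ⟨f b, ?_, hff b⟩
      simp only [Finset.mem_filter, Finset.mem_univ, true_and] at *
      exact (h b).2 hb
  have htot := Finset.card_filter_add_card_filter_not
    (s := (Finset.univ : Finset (Fin n → Bool))) (p := P)
  have huniv : (Finset.univ : Finset (Fin n → Bool)).card = 2 ^ n := by
    simp [Fintype.card_fun]
  have h2 : 2 ^ n = 2 ^ (n - 1) * 2 := by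
    rw [← pow_succ]; congr 1; omega
  omega

lemma hd_flip (v : Fin n → Bool) (i : Fin n) :
    hammingDist v (Function.update v i (!(v i))) = 1 := by
  rw [hammingDist]
  convert Finset.card_singleton i using 2
  ext j
  by_cases hj : j = i <;> simp [Function.update, hj]

lemma zmod2_cases (a : ZMod 2) : a = 0 ∨ a = 1 := by revert a; decide

lemma upper (hn : 2 ≤ n) (h4 : n % 4 ≠ 0) :
    ∃ D : Finset (Fin n → Bool),
      IsDistEqSet (hypercube n) (D : Set (Fin n → Bool)) ∧ D.card = 2 ^ (n - 1) := by
  have hn0 : 0 < n := by omega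
  set z : Fin n → Bool := fun _ => false with hz
  set D : Finset (Fin n → Bool) :=
    Finset.univ.filter (fun v => (hammingDist v z : ZMod 2) = 0) with hDdef
  have hmemD : ∀ v, v ∈ D ↔ (hammingDist v z : ZMod 2) = 0 := by
    intro v; simp [hDdef]
  refine ⟨D, ?_, ?_⟩
  · -- distance equalizer
    intro x hx y hy
    simp only [Finset.coe_filter, Set.mem_setOf_eq, hDdef] at hx hy
    have hx1 : (hammingDist x z : ZMod 2) = 1 := by
      rcases zmod2_cases (hammingDist x z : ZMod 2) with h | h
      · exact absurd (by simp [h]) hx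
      · exact h
    have hy1 : (hammingDist y z : ZMod 2) = 1 := by
      rcases zmod2_cases (hammingDist y z : ZMod 2) with h | h
      · exact absurd (by simp [h]) hy
      · exact h
    have hxy0 : ((hammingDist x y : ZMod 2)) = 0 := by
      rw [← parity_add x y z, hx1, hy1]; decide
    have hdvd : 2 ∣ hammingDist x y :=
      (ZMod.natCast_eq_zero_iff _ _).1 hxy0
    set d := hammingDist x y with hd
    obtain ⟨q, hq⟩ := hdvd
    set S : Finset (Fin n) := Finset.univ.filter (fun i => x i ≠ y i) with hSdef
    have hScard : S.card = d := rfl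
    obtain ⟨T, hTS, hTcard⟩ := Finset.exists_subset_card_eq
      (s := S) (n := q) (by omega)
    have hTd : ∀ i ∈ T, x i ≠ y i := fun i hi => by
      have := hTS hi; rw [hSdef, Finset.mem_filter] at this; exact this.2
    set w0 : Fin n → Bool := fun i => if i ∈ T then y i else x i with hw0
    have hxw0 : hammingDist x w0 = q := by
      rw [hammingDist, ← hTcard]
      congr 1
      ext i
      simp only [Finset.mem_filter, Finset.mem_univ, true_and, hw0]
      by_cases hi : i ∈ T
      · simpa [hi] using hTd i hi
      · simp [hi]
    have hyw0 : hammingDist y w0 = d - q := by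
      rw [hammingDist]
      have : (S \ T).card = d - q := by rw [Finset.card_sdiff_of_subset hTS, hScard, hTcard]
      rw [← this]
      congr 1
      ext i
      simp only [Finset.mem_filter, Finset.mem_univ, true_and, hw0, Finset.mem_sdiff, hSdef]
      by_cases hi : i ∈ T
      · simp [hi, hTd i hi]
      · simp [hi, ne_comm]
    have hw0z : (hammingDist w0 z : ZMod 2) = (q : ZMod 2) + 1 := by
      have h1 := parity_add w0 z x
      rw [hammingDist_comm z x, hx1, hammingDist_comm w0 x, hxw0] at h1
      exact h1.symm
    rcases zmod2_cases (q : ZMod 2) with hq0 | hq1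
    · -- q even: need to flip an extra coordinate outside S
      have hq2 : 2 ∣ q := (ZMod.natCast_eq_zero_iff _ _).1 hq0
      have hSne : S ≠ Finset.univ := by
        intro hSu
        have : d = n := by
          rw [← hScard, hSu, Finset.card_univ, Fintype.card_fin]
        obtain ⟨r, hr⟩ := hq2
        omega
      obtain ⟨j, hjS⟩ : ∃ j, j ∉ S := by
        by_contra h
        push_neg at h
        exact hSne (Finset.eq_univ_iff_forall.2 h)
      have hjT : j ∉ T := fun h => hjS (hTS h)
      have hjxy : x j = y j := by
        by_contra h
        exact hjS (by simp [hSdef, h])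
      set w : Fin n → Bool := Function.update w0 j (!(w0 j)) with hwdef
      have hw0j : w0 j = x j := by simp [hw0, hjT]
      have hxw : hammingDist x w = q + 1 := by
        rw [hammingDist, ← hTcard]
        rw [← Finset.card_insert_of_notMem hjT]
        congr 1
        ext i
        simp only [Finset.mem_filter, Finset.mem_univ, true_and, Finset.mem_insert]
        by_cases hij : i = j
        · subst hij
          simp [hwdef, hw0j]
        · simp only [hwdef, Function.update, hij, dif_neg, hw0]
          by_cases hi : i ∈ T
          · simpa [hi, hij] using hTd i hi
          · simp [hi, hij]
      have hyw : hammingDist y w = (d - q) + 1 := by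
        have hST : (S \ T).card = d - q := by rw [Finset.card_sdiff_of_subset hTS, hScard, hTcard]
        have hjST : j ∉ S \ T := fun h => hjS (Finset.mem_sdiff.1 h).1
        rw [hammingDist, ← hST, ← Finset.card_insert_of_notMem hjST]
        congr 1
        ext i
        simp only [Finset.mem_filter, Finset.mem_univ, true_and, Finset.mem_insert,
          Finset.mem_sdiff, hSdef]
        by_cases hij : i = j
        · subst hij
          simp [hwdef, hw0j, ← hjxy]
        · simp only [hwdef, Function.update, hij, dif_neg, hw0]
          by_cases hi : i ∈ T
          · simp [hi, hij, hTd i hi]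
          · simp [hi, hij, ne_comm]
      have hwmem : w ∈ D := by
        rw [hmemD]
        have h1 := parity_add w z w0
        rw [hammingDist_comm z w0] at h1
        have h2 : (hammingDist w w0 : ZMod 2) = 1 := by
          rw [hammingDist_comm w w0, hwdef, hd_flip]; decide
        rw [h2, hw0z, hq0] at h1
        rcases zmod2_cases (hammingDist w z : ZMod 2) with h | h
        · exact h
        · rw [h] at h1; simp at h1
      refine ⟨w, hwmem, ?_⟩
      rw [hc_dist, hc_dist, hxw, hyw]
      omega
    · -- q odd: w0 works
      have hwmem : w0 ∈ D := by
        rw [hmemD, hw0z, hq1]; decide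
      refine ⟨w0, hwmem, ?_⟩
      rw [hc_dist, hc_dist, hxw0, hyw0]
      omega
  · -- cardinality
    rw [hDdef]
    apply half_card hn0
    intro v
    set i0 : Fin n := ⟨0, hn0⟩
    have h1 := parity_add (Function.update v i0 (!(v i0))) v z
    have h2 : (hammingDist (Function.update v i0 (!(v i0))) v : ZMod 2) = 1 := by
      rw [hammingDist_comm, hd_flip]; decide
    rw [h2] at h1
    rcases zmod2_cases (hammingDist (Function.update v i0 (!(v i0))) z : ZMod 2) with h | h <;>
      rcases zmod2_cases (hammingDist v z : ZMod 2) with h' | h' <;>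
        rw [h, h'] at h1 ⊢ <;> simp_all <;> decide

lemma lower (hn : 2 ≤ n) (D : Finset (Fin n → Bool))
    (hD : IsDistEqSet (hypercube n) (D : Set (Fin n → Bool))) :
    2 ^ (n - 1) ≤ D.card := by
  have hn0 : 0 < n := by omega
  set i0 : Fin n := ⟨0, hn0⟩ with hi0
  set f : (Fin n → Bool) → (Fin n → Bool) := fun v => Function.update v i0 (!(v i0)) with hf
  have hcover : ∀ v, v ∈ D ∨ f v ∈ D := by
    intro v
    by_contra h
    push_neg at h
    obtain ⟨w, hw, hdist⟩ := hD v (by simpa using h.1) (f v) (by simpa using h.2)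
    rw [hc_dist, hc_dist] at hdist
    have h1 := parity_add v (f v) w
    rw [hdist, hf, hd_flip] at h1
    have : ∀ a : ZMod 2, ¬ (a + a = 1) := by decide
    exact this _ h1
  set A : Finset (Fin n → Bool) := Finset.univ.filter (fun v => v i0 = false) with hA
  have hAcard : A.card = 2 ^ (n - 1) := by
    rw [hA]
    apply half_card hn0
    intro v
    simp [← hi0]
  rw [← hAcard]
  apply Finset.card_le_card_of_injOn (fun v => if v ∈ D then v else f v)
  · intro v hv
    by_cases h : v ∈ D
    · simpa [h] using h
    · simpa [h] using (hcover v).resolve_left h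
  · intro a ha b hb hab
    have key : ∀ v ∈ A, Function.update (if v ∈ D then v else f v) i0 false = v := by
      intro v hv
      rw [hA, Finset.mem_filter] at hv
      by_cases h : v ∈ D <;>
      · simp only [h, if_pos, if_neg, ite_true, ite_false]
        funext j
        by_cases hj : j = i0 <;> simp [Function.update, hj, hf, hv.2]
    have := congrArg (fun u => Function.update u i0 false) hab
    simp only at this
    rw [key a ha, key b hb] at this
    exact this

end Aux

theorem stmt_7 (n : ℕ) (hn : 2 ≤ n) (h4 : n % 4 ≠ 0) :
    eqdim (hypercube n) = 2 ^ (n - 1) := by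
  obtain ⟨D, hD, hcard⟩ := upper hn h4
  refine le_antisymm (Nat.sInf_le ⟨D, hD, hcard⟩) ?_
  refine le_csInf ⟨2 ^ (n - 1), D, hD, hcard⟩ ?_
  rintro k ⟨E, hE, rfl⟩
  exact lower hn E hE
end

section
/- For any integer n ≥ 4 with n ≡ 0 (mod 4), the equidistant dimension of the hypercube Q_n satisfies 2^{n-1} ≤ ξ(Q_n) ≤ 2^{n-1} + 2^{n/2 - 2}. -/
open SimpleGraph

/-!
Hamming distance has the parity of the sum of the weights, so two vertices outside a
distance-equalizer set always have the same parity: its complement lies in one parity class,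
of size `2^(n-1)`.

For the upper bound take all odd vertices together with a small set `W` of even ones. Two even
vertices at distance `< n` are equidistant from the odd vertex obtained from `x` by flipping half
of the coordinates where `x` and `y` differ, plus one further coordinate if that half is even.
An antipodal pair `x, ¬x` is equalized exactly by the vertices at distance `n/2` from `x`.
Writing `n = 2m` and `x = (u, v)`, the vertex `(b, b)` is at distance `n/2` from `x` iff `b`
disagrees with `u` on half of the coordinates where `u = v`, and `(b, ¬b)` iff it does so on half
of those where `u ≠ v`. When `m ≥ 4` is even, one of the two can be achieved with `b` vanishing
on three fixed coordinates, which gives `|W| = 2 · 2^(m-3)`; for `n = 4`, `W = {0}` suffices.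
-/

open SimpleGraph Finset

namespace Hypercube

variable {n : ℕ}

lemma adj_iff {x y : Fin n → Bool} : (hypercube n).Adj x y ↔ hammingDist x y = 1 := by
  refine ⟨fun ⟨_, h⟩ => h.elim id fun h => hammingDist_comm x y ▸ h, fun h => ⟨?_, .inl h⟩⟩
  rintro rfl
  simp at h

lemma hammingDist_le_length {x y : Fin n → Bool} (p : (hypercube n).Walk x y) :
    hammingDist x y ≤ p.length := by
  induction p with
  | nil => simp
  | @cons x z y h p ih =>
    have := hammingDist_triangle x z y
    rw [Walk.length_cons, adj_iff.1 h] at *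
    omega

lemma exists_walk_length_eq_hammingDist (x y : Fin n → Bool) :
    ∃ p : (hypercube n).Walk x y, p.length = hammingDist x y := by
  induction h : hammingDist x y generalizing x with
  | zero =>
    obtain rfl := hammingDist_eq_zero.1 h
    exact ⟨.nil, rfl⟩
  | succ t ih =>
    obtain ⟨i, hi⟩ : ∃ i, x i ≠ y i := by
      by_contra! hxy
      simp [funext hxy] at h
    set z := Function.update x i (y i)
    have hxz : hammingDist x z = 1 := by
      rw [hammingDist, Finset.card_eq_one]
      exact ⟨i, by ext j; by_cases hj : j = i <;> simp [z, hj, hi]⟩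
    have hzy : hammingDist z y = t := by
      have : hammingDist z y + 1 = hammingDist x y := by
        simp only [hammingDist]
        rw [← Finset.card_erase_add_one (s := {j | x j ≠ y j}) (a := i) (by simpa using hi)]
        congr 2
        ext j; by_cases hj : j = i <;> simp [z, hj]
      omega
    obtain ⟨p, hp⟩ := ih z hzy
    exact ⟨.cons (adj_iff.2 hxz) p, by simp [hp]⟩

lemma dist_eq_hammingDist (x y : Fin n → Bool) :
    (hypercube n).dist x y = hammingDist x y := by
  obtain ⟨p, hp⟩ := exists_walk_length_eq_hammingDist x y
  obtain ⟨q, hq⟩ := Reachable.exists_walk_length_eq_dist ⟨p⟩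
  exact le_antisymm (hp ▸ dist_le p) (hq ▸ hammingDist_le_length q)

def parity (x : Fin n → Bool) : ZMod 2 := ∑ i, if x i then 1 else 0

lemma natCast_hammingDist (x y : Fin n → Bool) :
    (hammingDist x y : ZMod 2) = parity x + parity y := by
  rw [hammingDist, natCast_card_filter, parity, parity, ← sum_add_distrib]
  refine sum_congr rfl fun i _ => ?_
  cases x i <;> cases y i <;> decide

lemma parity_eq_of_hammingDist_eq {x y w : Fin n → Bool}
    (h : hammingDist x w = hammingDist y w) : parity x = parity y := by
  have := congrArg (Nat.cast : ℕ → ZMod 2) h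
  rw [natCast_hammingDist, natCast_hammingDist] at this
  exact add_right_cancel this

lemma even_hammingDist {x y : Fin n → Bool} (hx : parity x = 0) (hy : parity y = 0) :
    Even (hammingDist x y) := by
  rw [← ZMod.natCast_eq_zero_iff_even, natCast_hammingDist, hx, hy, add_zero]

def flipOn (S : Finset (Fin n)) (x : Fin n → Bool) : Fin n → Bool :=
  fun i => if i ∈ S then !x i else x i

lemma flipOn_flipOn (S : Finset (Fin n)) (x : Fin n → Bool) : flipOn S (flipOn S x) = x := by
  funext i
  by_cases h : i ∈ S <;> simp [flipOn, h]

lemma hammingDist_flipOn_self (S : Finset (Fin n)) (x : Fin n → Bool) :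
    hammingDist x (flipOn S x) = #S := by
  rw [hammingDist]
  congr 1
  ext i
  by_cases h : i ∈ S <;> simp [flipOn, h]

lemma hammingDist_flipOn_add (S : Finset (Fin n)) (x y : Fin n → Bool) :
    hammingDist y (flipOn S x) + 2 * #{i ∈ S | x i ≠ y i} = #S + hammingDist x y := by
  have hS : #S = #{i | i ∈ S} := by rw [filter_univ_mem]
  rw [hS, hammingDist, hammingDist, ← filter_univ_mem S, filter_filter]
  simp only [card_filter, mul_sum, ← sum_add_distrib]
  refine sum_congr rfl fun i _ => ?_
  by_cases h : i ∈ S <;> cases hx : x i <;> cases y i <;> simp [flipOn, h, hx]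

lemma parity_flipOn (S : Finset (Fin n)) (x : Fin n → Bool) :
    parity (flipOn S x) = parity x + #S := by
  have := natCast_hammingDist x (flipOn S x)
  rw [hammingDist_flipOn_self] at this
  grind

lemma two_mul_card_le_two_pow (i : Fin n) {S : Finset (Fin n → Bool)}
    (hS : ∀ x ∈ S, ∀ y ∈ S, parity x = parity y) : 2 * #S ≤ 2 ^ n := by
  have hdisj : Disjoint S (S.image (flipOn {i})) := by
    refine disjoint_left.2 fun x hx hx' => ?_
    obtain ⟨y, hy, rfl⟩ := mem_image.1 hx'
    have := hS _ hx y hy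
    rw [parity_flipOn, card_singleton, Nat.cast_one] at this
    grind
  calc 2 * #S = #(S ∪ S.image (flipOn {i})) := by
        rw [card_union_of_disjoint hdisj,
          card_image_of_injective _ (Function.LeftInverse.injective (flipOn_flipOn _))]
        ring
    _ ≤ 2 ^ n := by simpa using card_le_univ (S ∪ S.image (flipOn {i}))

lemma le_card_of_isDistEqSet (hn : n ≠ 0) {D : Finset (Fin n → Bool)}
    (hD : IsDistEqSet (hypercube n) D) : 2 ^ (n - 1) ≤ #D := by
  have hcompl : 2 * #Dᶜ ≤ 2 ^ n := two_mul_card_le_two_pow ⟨0, by omega⟩ fun x hx y hy => by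
    obtain ⟨w, -, hw⟩ := hD x (by simpa using hx) y (by simpa using hy)
    rw [dist_eq_hammingDist, dist_eq_hammingDist] at hw
    exact parity_eq_of_hammingDist_eq hw
  have hsum : #D + #Dᶜ = 2 ^ n := by simp [card_add_card_compl]
  have hpow : 2 ^ n = 2 * 2 ^ (n - 1) := by rw [← pow_succ', Nat.sub_add_cancel (by omega)]
  omega

lemma exists_parity_eq_one_hammingDist_eq {x y : Fin n → Bool} (hx : parity x = 0)
    (hy : parity y = 0) (hlt : hammingDist x y < n) :
    ∃ w, parity w = 1 ∧ hammingDist x w = hammingDist y w := by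
  set Δ : Finset (Fin n) := {i | x i ≠ y i}
  obtain ⟨k, hk⟩ := even_hammingDist hx hy
  set ε := if Even k then 1 else 0
  obtain ⟨S₀, hS₀, hcard₀⟩ := exists_subset_card_eq (s := Δ) (n := k) (by
    change k ≤ hammingDist x y; omega)
  obtain ⟨S₁, hS₁, hcard₁⟩ := exists_subset_card_eq (s := Δᶜ) (n := ε) (by
    rw [card_compl, Fintype.card_fin]
    change ε ≤ n - hammingDist x y
    simp only [ε]
    split <;> omega)
  have hdisj : Disjoint S₀ S₁ :=
    disjoint_of_subset_left hS₀ (disjoint_of_subset_right hS₁ disjoint_compl_right)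
  have hcard : #(S₀ ∪ S₁) = k + ε := by rw [card_union_of_disjoint hdisj, hcard₀, hcard₁]
  have hmeet : {i ∈ S₀ ∪ S₁ | x i ≠ y i} = S₀ := by
    ext i
    have h₀ := @hS₀ i
    have h₁ := @hS₁ i
    simp only [Δ, mem_filter, mem_compl, mem_univ, true_and] at h₀ h₁
    simp only [mem_filter, mem_union]
    tauto
  refine ⟨flipOn (S₀ ∪ S₁) x, ?_, ?_⟩
  · rw [parity_flipOn, hx, zero_add, hcard]
    rcases Nat.even_or_odd k with hpar | hpar <;> simp [ε, hpar, (ZMod.natCast_eq_one_iff_odd).2]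
  · have := hammingDist_flipOn_add (S₀ ∪ S₁) x y
    rw [hmeet, hcard, hcard₀] at this
    rw [hammingDist_flipOn_self, hcard]
    omega

lemma forall_ne_of_hammingDist_eq {x y : Fin n → Bool} (h : hammingDist x y = n) :
    ∀ i, x i ≠ y i := by
  have : ({i | x i ≠ y i} : Finset (Fin n)) = univ :=
    eq_univ_of_card _ (by rw [Fintype.card_fin]; exact h)
  simpa using this

lemma hammingDist_add_hammingDist_of_forall_ne {x y : Fin n → Bool} (h : ∀ i, x i ≠ y i)
    (w : Fin n → Bool) : hammingDist x w + hammingDist y w = n := by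
  rw [hammingDist, hammingDist, card_filter, card_filter, ← sum_add_distrib]
  conv_rhs => rw [← Fintype.card_fin n, Fintype.card_eq_sum_ones]
  refine sum_congr rfl fun i _ => ?_
  have := h i
  revert this
  cases x i <;> cases y i <;> cases w i <;> decide

def EqualizesAntipodes (W : Finset (Fin n → Bool)) : Prop :=
  ∀ x y, parity x = 0 → (∀ i, x i ≠ y i) → x ∉ W → y ∉ W →
    ∃ w ∈ W, hammingDist x w = hammingDist y w

lemma isDistEqSet_parity_one_union {W : Finset (Fin n → Bool)}
    (hW : EqualizesAntipodes W) :
    IsDistEqSet (hypercube n) ↑(({x | parity x = 1} : Finset _) ∪ W) := by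
  have houtside : ∀ z, z ∉ (↑(({x | parity x = 1} : Finset _) ∪ W) : Set (Fin n → Bool)) →
      parity z = 0 ∧ z ∉ W := fun z hz => by
    simp only [coe_union, coe_filter, mem_univ, true_and, Set.mem_union, Set.mem_ofPred_eq,
      SetLike.mem_coe, not_or] at hz
    exact ⟨(by decide : ∀ a : ZMod 2, a ≠ 1 → a = 0) _ hz.1, hz.2⟩
  intro x hx y hy
  obtain ⟨hx₀, hxW⟩ := houtside x hx
  obtain ⟨hy₀, hyW⟩ := houtside y hy
  simp only [dist_eq_hammingDist]
  rcases (hammingDist_le_card_fintype (x := x) (y := y)).lt_or_eq with hlt | heq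
  · obtain ⟨w, hw, hxyw⟩ := exists_parity_eq_one_hammingDist_eq hx₀ hy₀ (by simpa using hlt)
    exact ⟨w, by simp [hw], hxyw⟩
  · obtain ⟨w, hw, hxyw⟩ := hW x y hx₀ (forall_ne_of_hammingDist_eq (by simpa using heq)) hxW hyW
    exact ⟨w, by simp [hw], hxyw⟩

lemma hammingDist_append {α : Type*} [DecidableEq α] {m k : ℕ} (a c : Fin m → α)
    (b d : Fin k → α) :
    hammingDist (Fin.append a b) (Fin.append c d) = hammingDist a c + hammingDist b d := by
  simp only [hammingDist, card_filter, Fin.sum_univ_add, Fin.append_left, Fin.append_right]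

lemma parity_append {m k : ℕ} (a : Fin m → Bool) (b : Fin k → Bool) :
    parity (Fin.append a b) = parity a + parity b := by
  simp only [parity, Fin.sum_univ_add, Fin.append_left, Fin.append_right]

lemma hammingDist_not_right (u b : Fin n → Bool) :
    hammingDist u (fun j => !b j) = hammingDist (fun j => !u j) b := by
  simp only [hammingDist]
  congr 1
  ext j
  cases u j <;> cases b j <;> simp

lemma hammingDist_add_hammingDist (u v b : Fin n → Bool) :
    hammingDist u b + hammingDist v b = hammingDist u v + 2 * #{j | u j = v j ∧ u j ≠ b j} := by
  simp only [hammingDist, card_filter, mul_sum, ← sum_add_distrib]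
  refine sum_congr rfl fun j _ => ?_
  cases u j <;> cases v j <;> cases b j <;> simp

lemma exists_hammingDist_add_hammingDist_eq (K : Finset (Fin n)) {u v : Fin n → Bool}
    (hC : Even #{j | u j = v j}) (hK : 2 * #{j ∈ K | u j = v j} ≤ #{j | u j = v j}) :
    ∃ b, (∀ j ∈ K, b j = false) ∧ hammingDist u b + hammingDist v b = n := by
  -- the disagreements `M` of `b` with `u` inside `K` are forced, the others are chosen off `K`
  obtain ⟨s, hs⟩ := hC
  obtain ⟨M, hPM, hMt, hMcard⟩ := exists_subsuperset_card_eq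
    (s := {j ∈ K | u j = v j ∧ u j = true}) (t := {j | u j = v j ∧ (j ∈ K → u j = true)})
    (n := s) (fun j => by simp +contextual)
    ((card_le_card (t := {j ∈ K | u j = v j}) fun j => by simp +contextual).trans (by omega))
    (by
      have hsplit := card_filter_add_card_filter_not (s := {j | u j = v j}) (· ∈ K)
      have hfree : #{j ∈ {j | u j = v j} | j ∉ K} ≤ #{j | u j = v j ∧ (j ∈ K → u j = true)} :=
        card_le_card fun j => by simp +contextual
      rw [filter_filter, filter_filter] at hsplit
      rw [filter_filter] at hfree
      have : #{j | u j = v j ∧ j ∈ K} = #{j ∈ K | u j = v j} := by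
        congr 1; ext j; simp [and_comm]
      omega)
  refine ⟨fun j => if j ∈ K then false else if j ∈ M then !u j else u j,
    fun j hj => by simp [hj], ?_⟩
  have hmis : ({j | u j = v j ∧ u j ≠ if j ∈ K then false else if j ∈ M then !u j else u j} :
      Finset (Fin n)) = M := by
    ext j
    have h₁ := @hPM j
    have h₂ := @hMt j
    simp only [mem_filter, mem_univ, true_and] at h₁ h₂ ⊢
    by_cases hjK : j ∈ K <;> by_cases hjM : j ∈ M <;> cases hu : u j <;> cases hv : v j <;>
      simp_all
  have hN : hammingDist u v + #{j | u j = v j} = n := by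
    rw [hammingDist, add_comm, card_filter_add_card_filter_not, card_univ, Fintype.card_fin]
  rw [hammingDist_add_hammingDist, hmis, hMcard]
  omega

lemma exists_block_witness (K : Finset (Fin n)) (hK : 2 * #K < n + 4) (hn : Even n)
    {u v : Fin n → Bool} (huv : Even (hammingDist u v)) :
    ∃ b, (∀ j ∈ K, b j = false) ∧ (hammingDist u b + hammingDist v b = n ∨
      hammingDist u b + hammingDist v (fun j => !b j) = n) := by
  have hN : hammingDist u v + #{j | u j = v j} = n := by
    rw [hammingDist, add_comm, card_filter_add_card_filter_not, card_univ, Fintype.card_fin]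
  have hKsplit : #{j ∈ K | u j = v j} + #{j ∈ K | ¬u j = v j} = #K :=
    card_filter_add_card_filter_not _
  have hC : Even #{j | u j = v j} := (Nat.even_add.1 (by rwa [hN])).1 huv
  by_cases hsame : 2 * #{j ∈ K | u j = v j} ≤ #{j | u j = v j}
  · obtain ⟨b, hbK, hb⟩ := exists_hammingDist_add_hammingDist_eq K hC hsame
    exact ⟨b, hbK, .inl hb⟩
  -- otherwise `K` leaves enough room among the agreements of `u` and `!v`
  have hneg : ∀ s : Finset (Fin n), {j ∈ s | u j = !v j} = {j ∈ s | ¬u j = v j} :=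
    fun s => filter_congr fun j _ => by cases u j <;> cases v j <;> simp
  obtain ⟨c, hc⟩ := hC
  obtain ⟨d, hd⟩ := huv
  obtain ⟨b, hbK, hb⟩ := exists_hammingDist_add_hammingDist_eq (v := fun j => !v j) K
    (by rw [hneg]; exact ⟨d, hd⟩) (by
      rw [hneg, hneg, show #{j | ¬u j = v j} = hammingDist u v from rfl]
      omega)
  exact ⟨b, hbK, .inr (by rwa [hammingDist_not_right])⟩

lemma exists_equalizesAntipodes {m : ℕ} (hm : Even m) (hm4 : 4 ≤ m) :
    ∃ W : Finset (Fin (m + m) → Bool), EqualizesAntipodes W ∧ #W ≤ 2 ^ (m - 2) := by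
  obtain ⟨K, -, hK⟩ := exists_subset_card_eq (s := (univ : Finset (Fin m))) (n := 3)
    (by simp only [card_univ, Fintype.card_fin]; omega)
  set A : Finset (Fin m → Bool) := Fintype.piFinset fun j => if j ∈ K then {false} else univ
  have hA : #A = 2 ^ (m - 3) := by
    simp [A, Fintype.card_piFinset, apply_ite, prod_ite, filter_not, card_univ_sdiff, hK]
  have hmemA : ∀ b, (∀ j ∈ K, b j = false) → b ∈ A := fun b hb => Fintype.mem_piFinset.2
    fun j => by split_ifs with hj <;> simp [hb j, hj]
  refine ⟨A.image (fun b => Fin.append b b) ∪ A.image (fun b => Fin.append b fun j => !b j),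
    fun x y hx hxy _ _ => ?_, ?_⟩
  · obtain ⟨u, v, rfl⟩ : ∃ u v, Fin.append u v = x := ⟨_, _, Fin.append_castAdd_natAdd⟩
    have huv : Even (hammingDist u v) := by
      rw [← ZMod.natCast_eq_zero_iff_even, natCast_hammingDist, ← parity_append, hx]
    have hsum := hammingDist_add_hammingDist_of_forall_ne hxy
    obtain ⟨b, hbK, hb | hb⟩ := exists_block_witness K (by omega) hm huv
    · refine ⟨Fin.append b b, mem_union_left _ (mem_image_of_mem _ (hmemA b hbK)), ?_⟩
      have := hsum (Fin.append b b)
      rw [hammingDist_append] at this ⊢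
      omega
    · refine ⟨Fin.append b fun j => !b j, mem_union_right _ (mem_image_of_mem _ (hmemA b hbK)),
        ?_⟩
      have := hsum (Fin.append b fun j => !b j)
      rw [hammingDist_append] at this ⊢
      omega
  · calc #(_ ∪ _) ≤ #(A.image fun b => Fin.append b b) +
          #(A.image fun b => Fin.append b fun j => !b j) := card_union_le _ _
      _ ≤ #A + #A := add_le_add card_image_le card_image_le
      _ = 2 ^ (m - 2) := by rw [hA, ← two_mul, ← pow_succ']; congr 1; omega

lemma equalizesAntipodes_singleton_false :
    EqualizesAntipodes ({fun _ => false} : Finset (Fin 4 → Bool)) := by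
  intro x y hx hxy hx0 hy0
  refine ⟨fun _ => false, mem_singleton_self _, ?_⟩
  have hsum := hammingDist_add_hammingDist_of_forall_ne hxy (fun _ => false)
  have hxpos : hammingDist x (fun _ => false) ≠ 0 := hammingDist_ne_zero.2 (by simpa using hx0)
  have hypos : hammingDist y (fun _ => false) ≠ 0 := hammingDist_ne_zero.2 (by simpa using hy0)
  obtain ⟨k, hk⟩ := even_hammingDist hx (show parity (fun _ : Fin 4 => false) = 0 by decide)
  omega

end Hypercube

lemma eqdim_le_card {V : Type*} [Fintype V] {G : SimpleGraph V} {D : Finset V}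
    (hD : IsDistEqSet G D) : eqdim G ≤ #D :=
  Nat.sInf_le ⟨D, hD, rfl⟩

lemma le_eqdim {V : Type*} [Fintype V] {G : SimpleGraph V} {k : ℕ}
    (h : ∀ D : Finset V, IsDistEqSet G D → k ≤ #D) : k ≤ eqdim G :=
  le_csInf ⟨_, univ, fun x hx => (hx (mem_coe.2 (mem_univ x))).elim, rfl⟩
    fun _ ⟨D, hD, hk⟩ => hk ▸ h D hD

open Hypercube in
theorem stmt_8 (n : ℕ) (hn : 4 ≤ n) (h4 : n % 4 = 0) :
    2 ^ (n - 1) ≤ eqdim (hypercube n) ∧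
      eqdim (hypercube n) ≤ 2 ^ (n - 1) + 2 ^ (n / 2 - 2) := by
  refine ⟨le_eqdim fun D hD => le_card_of_isDistEqSet (by omega) hD, ?_⟩
  obtain ⟨m, rfl⟩ : ∃ m, n = m + m := ⟨n / 2, by omega⟩
  obtain ⟨W, hW, hWcard⟩ : ∃ W : Finset (Fin (m + m) → Bool),
      EqualizesAntipodes W ∧ #W ≤ 2 ^ (m - 2) := by
    rcases (show m = 2 ∨ 4 ≤ m by omega) with rfl | hm
    · exact ⟨_, equalizesAntipodes_singleton_false, by simp⟩
    · exact exists_equalizesAntipodes (by rw [Nat.even_iff]; omega) hm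
  have hodd : 2 * #({x | parity x = 1} : Finset (Fin (m + m) → Bool)) ≤ 2 ^ (m + m) :=
    two_mul_card_le_two_pow ⟨0, by omega⟩ (by simp +contextual)
  have hpow : 2 ^ (m + m) = 2 * 2 ^ (m + m - 1) := by
    rw [← pow_succ', Nat.sub_add_cancel (by omega)]
  calc eqdim (hypercube (m + m))
      ≤ #(({x | parity x = 1} : Finset _) ∪ W) :=
        eqdim_le_card (isDistEqSet_parity_one_union hW)
    _ ≤ #({x | parity x = 1} : Finset _) + #W := card_union_le _ _
    _ ≤ 2 ^ (m + m - 1) + 2 ^ ((m + m) / 2 - 2) := by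
        rw [show (m + m) / 2 = m by omega]
        omega
end

section
/- In the hypercube Q_n with n ≢ 0 (mod 4), n ≥ 2, the set B of vertices of odd weight (binary strings with an odd number of ones) is a distance-equalizer set: for any two distinct even-weight vertices v, w there exists an odd-weight vertex z with d(v,z) = d(w,z). -/
/-!
Two even-weight vertices `v`, `w` are at even distance `2k`. Copying `w` into `v` on `k` of the
coordinates where they differ gives a vertex at distance `k` from both, whose weight therefore
has the parity of `k`. If `k` is even, also flip one coordinate where `v` and `w` agree: this
raises both distances by one. Such a coordinate exists because `d(v, w) = 2k ≡ 0 (mod 4)`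
while `n ≢ 0 (mod 4)`, so `d(v, w) < n`.
-/

/-- The weight of a vertex of the hypercube: number of coordinates equal to 1. -/
def wt {n : ℕ} (v : Fin n → Bool) : ℕ := (Finset.univ.filter fun i => v i = true).card

open Finset

theorem hammingDist_add_two_mul_card_inter {n : ℕ} (v w : Fin n → Bool) :
    hammingDist v w + 2 * #{i | v i ∧ w i} = wt v + wt w := by
  simp only [hammingDist, wt, card_filter, mul_sum, ← sum_add_distrib]
  refine sum_congr rfl fun i _ => ?_
  cases v i <;> cases w i <;> rfl

theorem even_hammingDist_iff {n : ℕ} (v w : Fin n → Bool) :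
    Even (hammingDist v w) ↔ (Even (wt v) ↔ Even (wt w)) := by
  rw [← Nat.even_add, ← hammingDist_add_two_mul_card_inter, Nat.even_add]
  simp

section

variable {ι : Type*} [Fintype ι]

theorem exists_eq_of_hammingDist_lt_card {v w : ι → Bool}
    (h : hammingDist v w < Fintype.card ι) : ∃ j, v j = w j := by
  by_contra! hne
  exact h.ne (by simp [hammingDist, hne])

variable [DecidableEq ι]

theorem exists_hammingDist_eq_add_card {v w : ι → Bool} {k : ℕ}
    (hk : hammingDist v w = 2 * k) (F : Finset ι) (hF : ∀ i ∈ F, v i = w i) :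
    ∃ z, hammingDist v z = k + #F ∧ hammingDist w z = k + #F := by
  set S : Finset ι := {i | v i ≠ w i}
  have hS : #S = 2 * k := hk
  obtain ⟨A, hAS, hA⟩ := exists_subset_card_eq (s := S) (n := k) (by omega)
  have hAF : Disjoint A F := disjoint_left.2 fun i hiA hiF => by
    simpa [S, hF i hiF] using hAS hiA
  have hSF : Disjoint (S \ A) F := disjoint_left.2 fun i hiA hiF => by
    simpa [S, hF i hiF] using (mem_sdiff.1 hiA).1
  obtain ⟨z, hz⟩ : ∃ z : ι → Bool, ∀ i, z i = if i ∈ A then w i else if i ∈ F then !v i else v i :=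
    ⟨_, fun _ => rfl⟩
  have hvz : ({i | v i ≠ z i} : Finset ι) = A ∪ F := by
    ext i
    by_cases hiA : i ∈ A
    · simpa [hz, hiA, S, disjoint_left.1 hAF hiA] using hAS hiA
    · by_cases hiF : i ∈ F <;> simp [hz, hiA, hiF]
  have hwz : ({i | w i ≠ z i} : Finset ι) = (S \ A) ∪ F := by
    ext i
    by_cases hiA : i ∈ A
    · simp [hz, hiA, disjoint_left.1 hAF hiA]
    · by_cases hiF : i ∈ F
      · simp [hz, hiA, hiF, hF i hiF]
      · simp [hz, hiA, hiF, S, eq_comm]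
  refine ⟨z, ?_, ?_⟩
  · rw [hammingDist, hvz, card_union_of_disjoint hAF, hA]
  · rw [hammingDist, hwz, card_union_of_disjoint hSF, card_sdiff_of_subset hAS, hA]
    omega

end

theorem stmt_9_general (n : ℕ) (h4 : n % 4 ≠ 0)
    (v w : Fin n → Bool) (hv : Even (wt v)) (hw : Even (wt w)) :
    ∃ z : Fin n → Bool, Odd (wt z) ∧ hammingDist v z = hammingDist w z := by
  obtain ⟨k, hk⟩ : Even (hammingDist v w) := (even_hammingDist_iff v w).2 (iff_of_true hv hw)
  suffices ∃ F : Finset (Fin n), (∀ i ∈ F, v i = w i) ∧ Odd (k + #F) by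
    obtain ⟨F, hF, hodd⟩ := this
    obtain ⟨z, hvz, hwz⟩ := exists_hammingDist_eq_add_card (k := k) (by omega) F hF
    refine ⟨z, ?_, hvz.trans hwz.symm⟩
    have hparity := even_hammingDist_iff v z
    rw [hvz] at hparity
    rw [← Nat.not_even_iff_odd] at hodd ⊢
    tauto
  rcases Nat.even_or_odd k with hk_even | hk_odd
  · have hlt : hammingDist v w < Fintype.card (Fin n) := by
      obtain ⟨m, rfl⟩ := hk_even
      have := hammingDist_le_card_fintype (x := v) (y := w)
      simp only [Fintype.card_fin] at this ⊢
      omega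
    obtain ⟨j, hj⟩ := exists_eq_of_hammingDist_lt_card hlt
    exact ⟨{j}, by simpa using hj, by simpa [Nat.odd_add_one] using hk_even⟩
  · exact ⟨∅, by simp, by simpa using hk_odd⟩

theorem stmt_9 (n : ℕ) (hn : 2 ≤ n) (h4 : n % 4 ≠ 0)
    (v w : Fin n → Bool) (hv : Even (wt v)) (hw : Even (wt w)) (hvw : v ≠ w) :
    ∃ z : Fin n → Bool, Odd (wt z) ∧ hammingDist v z = hammingDist w z :=
  stmt_9_general n h4 v w hv hw
end

section
/- Let n be even, and in C_n □ K_2 (vertices (x,y) with x ∈ {1,...,n}, y ∈ {1,2}) let B = {v : x_v + y_v ≡ 1 (mod 2)} and A be its complement. If v, w ∈ A satisfy d_{C_n}(x_v, x_w) ≡ 0 (mod 2), then there exists s ∈ B with d(v,s) = d(w,s). -/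
set_option maxHeartbeats 1600000

/-- The distance between two vertices of the cycle `C_n`. -/
def cycDist {n : ℕ} (a b : Fin n) : ℕ :=
  min (max a.val b.val - min a.val b.val) (n - (max a.val b.val - min a.val b.val))

/-- The distance between two vertices of the prism `C_n □ K_2`. -/
def prismDist {n : ℕ} (v w : Fin n × Fin 2) : ℕ :=
  cycDist v.1 w.1 + (if v.2 = w.2 then 0 else 1)

theorem stmt_14 (n : ℕ) (hn : Even n) (v w : Fin n × Fin 2)
    (hv : ((v.1 : ℕ) + (v.2 : ℕ)) % 2 = 0) (hw : ((w.1 : ℕ) + (w.2 : ℕ)) % 2 = 0)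
    (hd : cycDist v.1 w.1 % 2 = 0) :
    ∃ s : Fin n × Fin 2, ((s.1 : ℕ) + (s.2 : ℕ)) % 2 = 1 ∧
      prismDist v s = prismDist w s := by
  obtain ⟨k, hk⟩ := hn
  have hva : (v.1 : ℕ) < n := v.1.isLt
  have hwb : (w.1 : ℕ) < n := w.1.isLt
  have hv2 : (v.2 : ℕ) < 2 := v.2.isLt
  have hw2 : (w.2 : ℕ) < 2 := w.2.isLt
  unfold cycDist at hd
  have hy : v.2 = w.2 := Fin.ext (by omega)
  have key : ∃ m, m < n ∧
      min (max (v.1 : ℕ) m - min (v.1 : ℕ) m) (n - (max (v.1 : ℕ) m - min (v.1 : ℕ) m))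
        = min (max (w.1 : ℕ) m - min (w.1 : ℕ) m)
            (n - (max (w.1 : ℕ) m - min (w.1 : ℕ) m)) := by
    set a := (v.1 : ℕ)
    set b := (w.1 : ℕ)
    by_cases h1 : (max a b - min a b) ≤ n - (max a b - min a b)
    · exact ⟨min a b + (max a b - min a b) / 2, by omega, by omega⟩
    · by_cases h2 : max a b + (n - (max a b - min a b)) / 2 < n
      · exact ⟨max a b + (n - (max a b - min a b)) / 2, by omega, by omega⟩
      · exact ⟨max a b + (n - (max a b - min a b)) / 2 - n, by omega, by omega⟩
  obtain ⟨mval, hmn, hmeq⟩ := key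
  refine ⟨(⟨mval, hmn⟩, ⟨(mval + 1) % 2, by omega⟩), ?_, ?_⟩
  · show (mval + (mval + 1) % 2) % 2 = 1
    omega
  · have hcyc : cycDist v.1 ⟨mval, hmn⟩ = cycDist w.1 ⟨mval, hmn⟩ := hmeq
    simp [prismDist, hcyc, hy]
end

section
/- Let n be even, and in C_n □ K_2 let B = {v : x_v + y_v ≡ 1 (mod 2)} and A be its complement. If v, w ∈ A satisfy d_{C_n}(x_v, x_w) ≡ 1 (mod 4), then there exists s ∈ B with d(v,s) = d(w,s). -/
lemma cycDist_comm' {n : ℕ} (a b : Fin n) : cycDist a b = cycDist b a := by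
  unfold cycDist; omega

set_option maxHeartbeats 1000000 in
lemma key_15 (n : ℕ) (hn : Even n) (v w : Fin n × Fin 2)
    (hv : ((v.1 : ℕ) + (v.2 : ℕ)) % 2 = 0) (hw : ((w.1 : ℕ) + (w.2 : ℕ)) % 2 = 0)
    (hd : cycDist v.1 w.1 % 4 = 1) (hab : (v.1 : ℕ) ≤ (w.1 : ℕ)) :
    ∃ s : Fin n × Fin 2, ((s.1 : ℕ) + (s.2 : ℕ)) % 2 = 1 ∧
      prismDist v s = prismDist w s := by
  have ha : (v.1 : ℕ) < n := v.1.isLt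
  have hb : (w.1 : ℕ) < n := w.1.isLt
  obtain ⟨N, hN⟩ := hn
  obtain ⟨t, ht⟩ : ∃ t, cycDist v.1 w.1 = 4 * t + 1 := ⟨cycDist v.1 w.1 / 4, by omega⟩
  have hcyc : cycDist v.1 w.1 = min ((w.1 : ℕ) - (v.1 : ℕ)) (n - ((w.1 : ℕ) - (v.1 : ℕ))) := by
    unfold cycDist; omega
  have h2v : (v.2 : ℕ) < 2 := v.2.isLt
  have h2w : (w.2 : ℕ) < 2 := w.2.isLt
  have hy : (w.2 : ℕ) ≠ (v.2 : ℕ) := by omega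
  have hyne : w.2 ≠ v.2 := fun h => hy (by rw [h])
  set a := (v.1 : ℕ) with haa
  set b := (w.1 : ℕ) with hbb
  set k := b - a with hk
  -- m = 2t+1 is the distance from v to s; d - m = 2t from w to s
  by_cases hcase : k ≤ n - k
  · -- geodesic goes from a up to b; s at a + (2t+1)
    refine ⟨(⟨a + (2 * t + 1), by omega⟩, v.2), by simp; omega, ?_⟩
    simp [prismDist, cycDist, hyne, ← haa, ← hbb]
    omega
  · by_cases hcase2 : 2 * t + 1 ≤ a
    · -- geodesic wraps; s at a - (2t+1)
      refine ⟨(⟨a - (2 * t + 1), by omega⟩, v.2), by simp; omega, ?_⟩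
      simp [prismDist, cycDist, hyne, ← haa, ← hbb]
      omega
    · -- geodesic wraps; s at a + n - (2t+1)
      refine ⟨(⟨a + n - (2 * t + 1), by omega⟩, v.2), by simp; omega, ?_⟩
      simp [prismDist, cycDist, hyne, ← haa, ← hbb]
      omega

theorem stmt_15 (n : ℕ) (hn : Even n) (v w : Fin n × Fin 2)
    (hv : ((v.1 : ℕ) + (v.2 : ℕ)) % 2 = 0) (hw : ((w.1 : ℕ) + (w.2 : ℕ)) % 2 = 0)
    (hd : cycDist v.1 w.1 % 4 = 1) :
    ∃ s : Fin n × Fin 2, ((s.1 : ℕ) + (s.2 : ℕ)) % 2 = 1 ∧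
      prismDist v s = prismDist w s := by
  rcases le_total (v.1 : ℕ) (w.1 : ℕ) with h | h
  · exact key_15 n hn v w hv hw hd h
  · obtain ⟨s, hs1, hs2⟩ :=
      key_15 n hn w v hw hv (by rwa [cycDist_comm'] ) h
    exact ⟨s, hs1, hs2.symm⟩
end

section
/- Let n ≥ 6 with n ≡ 2 (mod 4), and in C_n □ K_2 let B = {v : x_v + y_v ≡ 1 (mod 2)} and A be its complement. If v, w ∈ A satisfy d_{C_n}(x_v, x_w) ≡ 3 (mod 4), then the bisector B_{v|w} = {x : d(v,x) = d(w,x)} is contained in A. -/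
set_option maxHeartbeats 1000000


lemma if_eq_mod (a b : Fin 2) : (if a = b then 0 else 1 : ℕ) = (a.val + b.val) % 2 := by
  fin_cases a <;> fin_cases b <;> rfl

/-- nat version of the cycle distance -/
def nDist (n a b : ℕ) : ℕ := min ((a - b) + (b - a)) (n - ((a - b) + (b - a)))

lemma cycDist_eq {n : ℕ} (a b : Fin n) : cycDist a b = nDist n a.val b.val := by
  unfold cycDist nDist
  congr 1 <;> omega

lemma nDist_bound (n a b : ℕ) (ha : a < n) (hb : b < n) : 2 * nDist n a b ≤ n := by
  unfold nDist; omega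

lemma nDist_parity (n a b : ℕ) (hn : n % 2 = 0) (ha : a < n) (hb : b < n) :
    nDist n a b % 2 = (a + b) % 2 := by
  unfold nDist; omega

lemma tri (n p q r : ℕ) (hp : p < n) (hq : q < n) (hr : r < n) :
    nDist n p q = nDist n p r + nDist n q r ∨
    nDist n p q + nDist n p r + nDist n q r = n ∨
    nDist n p q + nDist n q r = nDist n p r ∨
    nDist n p q + nDist n p r = nDist n q r ∨
    nDist n p q + nDist n p r = n + nDist n q r ∨
    nDist n p q + nDist n q r = n + nDist n p r := by
  unfold nDist; omega

lemma key (n p q r ep eq' er : ℕ) (hn : 6 ≤ n) (h4 : n % 4 = 2)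
    (hp : p < n) (hq : q < n) (hr : r < n)
    (hv : (p + ep) % 2 = 0) (hw : (q + eq') % 2 = 0)
    (hd : nDist n p q % 4 = 3)
    (h : nDist n p r + (ep + er) % 2 = nDist n q r + (eq' + er) % 2) :
    (r + er) % 2 = 0 := by
  have hn2 : n % 2 = 0 := by omega
  have B1 := nDist_bound n p q hp hq
  have B2 := nDist_bound n p r hp hr
  have B3 := nDist_bound n q r hq hr
  have P1 := nDist_parity n p q hn2 hp hq
  have P2 := nDist_parity n p r hn2 hp hr
  have P3 := nDist_parity n q r hn2 hq hr
  have T := tri n p q r hp hq hr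
  generalize nDist n p q = d at *
  generalize nDist n p r = a at *
  generalize nDist n q r = b at *
  rcases T with t | t | t | t | t | t <;> omega

theorem stmt_16 (n : ℕ) (hn : 6 ≤ n) (h4 : n % 4 = 2) (v w : Fin n × Fin 2)
    (hv : ((v.1 : ℕ) + (v.2 : ℕ)) % 2 = 0) (hw : ((w.1 : ℕ) + (w.2 : ℕ)) % 2 = 0)
    (hd : cycDist v.1 w.1 % 4 = 3) :
    ∀ x : Fin n × Fin 2, prismDist v x = prismDist w x →
      ((x.1 : ℕ) + (x.2 : ℕ)) % 2 = 0 := by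
  obtain ⟨v1, v2⟩ := v
  obtain ⟨w1, w2⟩ := w
  rintro ⟨x1, x2⟩ h
  simp only [prismDist, if_eq_mod, cycDist_eq] at h hd
  exact key n v1.val w1.val x1.val v2.val w2.val x2.val hn h4 v1.isLt w1.isLt x1.isLt hv hw hd h
end

section
/- In P_n □ P_n with vertex set {1,...,n}², the set B_n = {(i,j) : i ≡ j (mod 2)} is a distance-equalizer set: for any two vertices v, w ∉ B_n, there exists z ∈ B_n with d(v,z) = d(w,z). -/
set_option maxHeartbeats 1600000


/-- The distance between two vertices of the grid `P_n □ P_n`. -/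
def gridDist {n : ℕ} (v w : Fin n × Fin n) : ℕ :=
  (max v.1.val w.1.val - min v.1.val w.1.val) +
    (max v.2.val w.2.val - min v.2.val w.2.val)

lemma grid_helper (n a b c d : ℕ) (hn : 2 ≤ n) (ha : a < n) (hb : b < n) (hc : c < n)
    (hd : d < n) (hv : a % 2 ≠ b % 2) (hw : c % 2 ≠ d % 2) (hac : a ≤ c)
    (hbd : max b d - min b d ≤ c - a) :
    ∃ x y, x < n ∧ y < n ∧ x % 2 = y % 2 ∧
      (max a x - min a x) + (max b y - min b y)
        = (max c x - min c x) + (max d y - min d y) := by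
  obtain ⟨x, hx⟩ : ∃ x, 2 * x = a + c + d - b := ⟨(a + c + d - b) / 2, by omega⟩
  obtain ⟨x', hx'⟩ : ∃ x', 2 * x' = a + c + b - d := ⟨(a + c + b - d) / 2, by omega⟩
  by_cases h1 : x % 2 = 0
  · exact ⟨x, 0, by omega, by omega, by omega, by omega⟩
  · by_cases h2 : 1 ≤ min b d
    · exact ⟨x, 1, by omega, by omega, by omega, by omega⟩
    · by_cases h3 : (n - 1) % 2 = x' % 2
      · exact ⟨x', n - 1, by omega, by omega, by omega, by omega⟩
      · by_cases h4 : max b d ≤ n - 2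
        · exact ⟨x', n - 2, by omega, by omega, by omega, by omega⟩
        · exact ⟨0, 0, by omega, by omega, by omega, by omega⟩

lemma grid_key (n a b c d : ℕ) (hn : 2 ≤ n) (ha : a < n) (hb : b < n) (hc : c < n)
    (hd : d < n) (hv : a % 2 ≠ b % 2) (hw : c % 2 ≠ d % 2) :
    ∃ x y, x < n ∧ y < n ∧ x % 2 = y % 2 ∧
      (max a x - min a x) + (max b y - min b y)
        = (max c x - min c x) + (max d y - min d y) := by
  rcases le_total (max b d - min b d) (max a c - min a c) with h | h
  · rcases le_total a c with h' | h'
    · exact grid_helper n a b c d hn ha hb hc hd hv hw h' (by omega)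
    · obtain ⟨x, y, hx, hy, hp, he⟩ :=
        grid_helper n c d a b hn hc hd ha hb hw hv h' (by omega)
      exact ⟨x, y, hx, hy, hp, he.symm⟩
  · rcases le_total b d with h' | h'
    · obtain ⟨x, y, hx, hy, hp, he⟩ :=
        grid_helper n b a d c hn hb ha hd hc (Ne.symm hv) (Ne.symm hw) h' (by omega)
      exact ⟨y, x, hy, hx, hp.symm, by omega⟩
    · obtain ⟨x, y, hx, hy, hp, he⟩ :=
        grid_helper n d c b a hn hd hc hb ha (Ne.symm hw) (Ne.symm hv) h' (by omega)
      exact ⟨y, x, hy, hx, hp.symm, by omega⟩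

theorem stmt_19 (n : ℕ) (hn : 2 ≤ n)
    (B : Set (Fin n × Fin n)) (hB : B = {p | (p.1 : ℕ) % 2 = (p.2 : ℕ) % 2}) :
    ∀ v ∉ B, ∀ w ∉ B, ∃ z ∈ B, gridDist v z = gridDist w z := by
  subst hB
  intro v hv w hw
  simp only [Set.mem_setOf_eq] at hv hw
  obtain ⟨x, y, hx, hy, hp, he⟩ :=
    grid_key n v.1 v.2 w.1 w.2 hn v.1.isLt v.2.isLt w.1.isLt w.2.isLt hv hw
  exact ⟨(⟨x, hx⟩, ⟨y, hy⟩), hp, by simpa [gridDist] using he⟩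
end
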